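/- arXiv:math/0111112 — 6 statements merged into one kernel-verified Lean document; each statement's English description precedes it below -/
import Mathlib

section
/- Let m' ≥ m and n' ≥ n be positive integers. The k-algebra homomorphism E_{(m',n',m,n)} : k[a]_{m',n'} → k[a]_{m,n} maps each maximal minor of the generic (m'+n')×m' matrix as follows: E_{(m',n',m,n)}(d_{j_0...j_{m'-1}}) = d_{l_0...l_{m-1}} if (j_0,...,j_{m'-1}) = (-m',...,-m-1,l_0,...,l_{m-1}) with -m ≤ l_0 < ... < l_{m-1} ≤ n-1, and E_{(m',n',m,n)}(d_{j_0...j_{m'-1}}) = 0 otherwise. Consequently E_{(m',n',m,n)} restricts to a surjective k-algebra homomorphism e_{(m',n',m,n)} : k[δ_{m',n'}] → k[δ_{m,n}]. -/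
open MvPolynomial

noncomputable section

/-- Row indices of the generic `(m+n) × m` matrix: integers `-m, ..., n-1`. -/
abbrev RowI (m n : ℕ) : Type := ↥(Finset.Icc (-(m : ℤ)) ((n : ℤ) - 1))

/-- Column indices: integers `-m, ..., -1`. -/
abbrev ColI (m : ℕ) : Type := ↥(Finset.Icc (-(m : ℤ)) (-1 : ℤ))

/-- `k[a]_{m,n}`, the coordinate ring of generic `(m+n) × m` matrices. -/
abbrev MatRing (k : Type) [Field k] (m n : ℕ) : Type :=
  MvPolynomial (RowI m n × ColI m) k

/-- The maximal minor `d_I` on the rows in `I` (an `m`-element subset of `{-m,...,n-1}`). -/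
def dMinor (k : Type) [Field k] (m n : ℕ) (I : Finset ℤ) (hI : I.card = m)
    (hsub : I ⊆ Finset.Icc (-(m : ℤ)) ((n : ℤ) - 1)) : MatRing k m n :=
  Matrix.det (Matrix.of fun s t : Fin m =>
    (X (⟨I.orderEmbOfFin hI s, hsub (Finset.orderEmbOfFin_mem I hI s)⟩,
       ⟨-(m : ℤ) + (t : ℕ), by
          have := t.2
          simp only [Finset.mem_Icc]
          omega⟩) : MatRing k m n))

/-- `k[δ_{m,n}]`, the subalgebra generated by all the maximal minors. -/
def DeltaSub (k : Type) [Field k] (m n : ℕ) : Subalgebra k (MatRing k m n) :=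
  Algebra.adjoin k {x | ∃ I hI hsub, x = dMinor k m n I hI hsub}

/-- The substitution homomorphism `E_{(m',n',m,n)} : k[a]_{m',n'} → k[a]_{m,n}`. -/
def Emap (k : Type) [Field k] (m n m' n' : ℕ) : MatRing k m' n' →ₐ[k] MatRing k m n :=
  aeval fun p : RowI m' n' × ColI m' =>
    if h : (p.1.1 ∈ Finset.Icc (-(m : ℤ)) ((n : ℤ) - 1)) ∧
        (p.2.1 ∈ Finset.Icc (-(m : ℤ)) (-1 : ℤ)) then
      (X (⟨p.1.1, h.1⟩, ⟨p.2.1, h.2⟩) : MatRing k m n)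
    else if p.1.1 = p.2.1 then 1 else 0

lemma emap_X_apply (k : Type) [Field k] (m n m' n' : ℕ) (p : RowI m' n' × ColI m') :
    Emap k m n m' n' (X p) =
      if h : (p.1.1 ∈ Finset.Icc (-(m : ℤ)) ((n : ℤ) - 1)) ∧
          (p.2.1 ∈ Finset.Icc (-(m : ℤ)) (-1 : ℤ)) then
        X (⟨p.1.1, h.1⟩, ⟨p.2.1, h.2⟩)
      else if p.1.1 = p.2.1 then 1 else 0 := by
  simp only [Emap, aeval_X]
lemma emap_det (k : Type) [Field k] (m n m' n' : ℕ)
    (M : Matrix (Fin m') (Fin m') (MatRing k m' n')) :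
    Emap k m n m' n' M.det = (M.map (Emap k m n m' n')).det :=
  RingHom.map_det _ M

lemma partA (k : Type) [Field k] (m n m' n' : ℕ) (hm : 0 < m) (hn : 0 < n)
    (hmm : m ≤ m') (hnn : n ≤ n')
    (J : Finset ℤ) (hJ : J.card = m')
    (hJsub : J ⊆ Finset.Icc (-(m' : ℤ)) ((n' : ℤ) - 1))
    (hsup : Finset.Icc (-(m' : ℤ)) (-(m : ℤ) - 1) ⊆ J)
    (hIsub : J \ Finset.Icc (-(m' : ℤ)) (-(m : ℤ) - 1) ⊆ Finset.Icc (-(m : ℤ)) ((n : ℤ) - 1))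
    (hI : (J \ Finset.Icc (-(m' : ℤ)) (-(m : ℤ) - 1)).card = m) :
    Emap k m n m' n' (dMinor k m' n' J hJ hJsub) =
      dMinor k m n (J \ Finset.Icc (-(m' : ℤ)) (-(m : ℤ) - 1)) hI hIsub := by
  set I := J \ Finset.Icc (-(m' : ℤ)) (-(m : ℤ) - 1) with hIdef
  set c := m' - m with hc
  have hcm : c + m = m' := by omega
  -- the order embedding of J splits
  set g : Fin m' → ℤ := fun s =>
    if (s : ℕ) < c then -(m' : ℤ) + (s : ℕ)
    else I.orderEmbOfFin hI ⟨(s : ℕ) - c, by have := s.isLt; omega⟩ with hgdef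
  have hImem : ∀ p : Fin m, (-(m : ℤ)) ≤ I.orderEmbOfFin hI p ∧
      I.orderEmbOfFin hI p ≤ (n : ℤ) - 1 := by
    intro p
    have := hIsub (Finset.orderEmbOfFin_mem I hI p)
    simpa [Finset.mem_Icc] using this
  have hg_mem : ∀ s, g s ∈ J := by
    intro s
    simp only [hgdef]
    split_ifs with h
    · apply hsup
      simp only [Finset.mem_Icc]
      omega
    · exact (Finset.sdiff_subset) (Finset.orderEmbOfFin_mem I hI _)
  have hg_mono : StrictMono g := by
    intro s t hst
    have hst' : (s : ℕ) < (t : ℕ) := hst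
    simp only [hgdef]
    split_ifs with h1 h2 h2
    · omega
    · have := (hImem ⟨(t : ℕ) - c, by have := t.isLt; omega⟩).1
      omega
    · omega
    · exact (I.orderEmbOfFin hI).strictMono (by simp [Fin.lt_def]; omega)
  have hgeq : g = ⇑(J.orderEmbOfFin hJ) :=
    Finset.orderEmbOfFin_unique hJ hg_mem hg_mono
  have hrowval : ∀ s : Fin m', (J.orderEmbOfFin hJ s : ℤ) = g s := by
    intro s; rw [hgeq]
  -- the equivalence
  set e : Fin c ⊕ Fin m ≃ Fin m' := finSumFinEquiv.trans (finCongr hcm) with hedef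
  have he1 : ∀ i : Fin c, ((e (Sum.inl i)) : ℕ) = (i : ℕ) := by
    intro i; simp [hedef]
  have he2 : ∀ p : Fin m, ((e (Sum.inr p)) : ℕ) = c + (p : ℕ) := by
    intro p; simp [hedef]
  unfold dMinor
  rw [emap_det, ← Matrix.det_submatrix_equiv_self e]
  have hblock :
      ((Matrix.of fun s t : Fin m' =>
        (X (⟨J.orderEmbOfFin hJ s, hJsub (Finset.orderEmbOfFin_mem J hJ s)⟩,
          ⟨-(m' : ℤ) + (t : ℕ), by
            have := t.2
            simp only [Finset.mem_Icc]
            omega⟩) : MatRing k m' n')).map (Emap k m n m' n')).submatrix e e =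
      Matrix.fromBlocks 1 0 0
        (Matrix.of fun s t : Fin m =>
          (X (⟨I.orderEmbOfFin hI s, hIsub (Finset.orderEmbOfFin_mem I hI s)⟩,
            ⟨-(m : ℤ) + (t : ℕ), by
              have := t.2
              simp only [Finset.mem_Icc]
              omega⟩) : MatRing k m n)) := by
    ext st t
    rcases st with i | p <;> rcases t with j | q <;>
      simp only [Matrix.submatrix_apply, Matrix.map_apply, Matrix.of_apply,
        emap_X_apply, Matrix.fromBlocks_apply₁₁, Matrix.fromBlocks_apply₁₂,
        Matrix.fromBlocks_apply₂₁, Matrix.fromBlocks_apply₂₂]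
    · -- inl inl : identity block
      have hrow : (J.orderEmbOfFin hJ (e (Sum.inl i)) : ℤ) = -(m' : ℤ) + (i : ℕ) := by
        rw [hrowval]
        simp only [hgdef]
        rw [if_pos (by rw [he1]; exact i.isLt), he1]
      rw [dif_neg (by
        rw [hrow]
        simp only [Finset.mem_Icc, not_and]
        intro h
        exfalso
        have := i.isLt
        omega)]
      rw [Matrix.one_apply]
      by_cases hij : i = j
      · subst hij
        rw [if_pos (by rw [hrow, he1]), if_pos rfl]
      · rw [if_neg (by
          rw [hrow, he1]
          intro h
          exact hij (Fin.ext (by omega))), if_neg hij]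
    · -- inl inr : zero
      have hrow : (J.orderEmbOfFin hJ (e (Sum.inl i)) : ℤ) = -(m' : ℤ) + (i : ℕ) := by
        rw [hrowval]
        simp only [hgdef]
        rw [if_pos (by rw [he1]; exact i.isLt), he1]
      rw [dif_neg (by
        rw [hrow]
        simp only [Finset.mem_Icc, not_and]
        intro h
        exfalso
        have := i.isLt
        omega)]
      rw [if_neg (by rw [hrow, he2]; have := i.isLt; omega)]
      rfl
    · -- inr inl : zero
      have hrow : (J.orderEmbOfFin hJ (e (Sum.inr p)) : ℤ) =
          I.orderEmbOfFin hI ⟨(p : ℕ), p.isLt⟩ := by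
        rw [hrowval]
        simp only [hgdef]
        rw [if_neg (by rw [he2]; omega)]
        congr 1
        ext
        simp [he2]
      rw [dif_neg (by
        simp only [Finset.mem_Icc, not_and]
        intro _ hcol
        exfalso
        have := (hImem ⟨(p : ℕ), p.isLt⟩).1
        have hj := j.isLt
        rw [he1] at hcol
        omega)]
      rw [if_neg (by
        rw [hrow, he1]
        have := (hImem ⟨(p : ℕ), p.isLt⟩).1
        have hj := j.isLt
        omega)]
      rfl
    · -- inr inr : the minor block
      have hrow : (J.orderEmbOfFin hJ (e (Sum.inr p)) : ℤ) =
          I.orderEmbOfFin hI ⟨(p : ℕ), p.isLt⟩ := by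
        rw [hrowval]
        simp only [hgdef]
        rw [if_neg (by rw [he2]; omega)]
        congr 1
        ext
        simp [he2]
      have hcol : -(m' : ℤ) + ((e (Sum.inr q)) : ℕ) = -(m : ℤ) + (q : ℕ) := by
        rw [he2]; push_cast; omega
      have hcond : ((J.orderEmbOfFin hJ (e (Sum.inr p)) : ℤ) ∈
            Finset.Icc (-(m : ℤ)) ((n : ℤ) - 1)) ∧
          ((-(m' : ℤ) + ((e (Sum.inr q)) : ℕ)) ∈ Finset.Icc (-(m : ℤ)) (-1 : ℤ)) := by
        constructor
        · rw [hrow]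
          exact hIsub (Finset.orderEmbOfFin_mem I hI _)
        · rw [hcol]
          simp only [Finset.mem_Icc]
          have := q.isLt
          omega
      rw [dif_pos hcond]
      have h1 : (⟨((J.orderEmbOfFin hJ) (e (Sum.inr p)) : ℤ), hcond.1⟩ : RowI m n) =
          ⟨((I.orderEmbOfFin hI) p : ℤ), hIsub (Finset.orderEmbOfFin_mem I hI p)⟩ :=
        Subtype.ext hrow
      have h2 : (⟨-(m' : ℤ) + ((e (Sum.inr q)) : ℕ), hcond.2⟩ : ColI m) =
          ⟨-(m : ℤ) + (q : ℕ), by simp only [Finset.mem_Icc]; have := q.isLt; omega⟩ :=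
        Subtype.ext hcol
      rw [h1, h2]
  rw [hblock, Matrix.det_fromBlocks_zero₂₁, Matrix.det_one, one_mul]
lemma partB (k : Type) [Field k] (m n m' n' : ℕ) (hm : 0 < m) (hn : 0 < n)
    (hmm : m ≤ m') (hnn : n ≤ n')
    (J : Finset ℤ) (hJ : J.card = m')
    (hJsub : J ⊆ Finset.Icc (-(m' : ℤ)) ((n' : ℤ) - 1))
    (hnot : ¬ (Finset.Icc (-(m' : ℤ)) (-(m : ℤ) - 1) ⊆ J ∧
        J \ Finset.Icc (-(m' : ℤ)) (-(m : ℤ) - 1) ⊆ Finset.Icc (-(m : ℤ)) ((n : ℤ) - 1))) :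
    Emap k m n m' n' (dMinor k m' n' J hJ hJsub) = 0 := by
  unfold dMinor
  rw [emap_det]
  by_cases hsub : Finset.Icc (-(m' : ℤ)) (-(m : ℤ) - 1) ⊆ J
  · -- some row of J lies outside Icc (-m) (n-1): that row of the matrix is zero
    have hns : ¬ (J \ Finset.Icc (-(m' : ℤ)) (-(m : ℤ) - 1) ⊆
        Finset.Icc (-(m : ℤ)) ((n : ℤ) - 1)) := fun h => hnot ⟨hsub, h⟩
    obtain ⟨r0, hr0, hr0n⟩ := Finset.not_subset.mp hns
    have hr0J : r0 ∈ J := (Finset.mem_sdiff.mp hr0).1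
    have hr0nIcc : r0 ∉ Finset.Icc (-(m' : ℤ)) (-(m : ℤ) - 1) := (Finset.mem_sdiff.mp hr0).2
    have hbounds : (n : ℤ) ≤ r0 := by
      have h1 := hJsub hr0J
      simp only [Finset.mem_Icc] at h1 hr0nIcc hr0n
      omega
    have : r0 ∈ Set.range ⇑(J.orderEmbOfFin hJ) := by
      rw [Finset.range_orderEmbOfFin]; exact hr0J
    obtain ⟨s0, hs0⟩ := this
    apply Matrix.det_eq_zero_of_row_eq_zero s0
    intro t
    rw [Matrix.map_apply, Matrix.of_apply, emap_X_apply]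
    rw [dif_neg (by
      simp only [Finset.mem_Icc, not_and, hs0]
      intro h
      exfalso
      omega)]
    rw [if_neg (by
      dsimp only
      rw [hs0]
      have := t.isLt
      omega)]
  · -- some column index in {-m',...,-m-1} is missing from J: that column is zero
    obtain ⟨c0, hc0, hc0J⟩ := Finset.not_subset.mp hsub
    simp only [Finset.mem_Icc] at hc0
    set t0 : Fin m' := ⟨(c0 + (m' : ℤ)).toNat, by omega⟩ with ht0
    have ht0v : -(m' : ℤ) + ((t0 : ℕ) : ℤ) = c0 := by
      simp only [ht0]
      omega
    apply Matrix.det_eq_zero_of_column_eq_zero t0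
    intro s
    rw [Matrix.map_apply, Matrix.of_apply, emap_X_apply]
    rw [dif_neg (by
      dsimp only
      rw [ht0v]
      simp only [Finset.mem_Icc, not_and]
      intro _ h
      omega)]
    rw [if_neg (by
      dsimp only
      rw [ht0v]
      intro h
      exact hc0J (h ▸ Finset.orderEmbOfFin_mem J hJ s))]
lemma card_icc (m m' : ℕ) (hmm : m ≤ m') :
    (Finset.Icc (-(m' : ℤ)) (-(m : ℤ) - 1)).card = m' - m := by
  rw [Int.card_Icc]; omega

lemma dMinor_congr (k : Type) [Field k] (m n : ℕ) (I I' : Finset ℤ) (h : I = I')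
    (hI : I.card = m) (hsub : I ⊆ Finset.Icc (-(m : ℤ)) ((n : ℤ) - 1))
    (hI' : I'.card = m) (hsub' : I' ⊆ Finset.Icc (-(m : ℤ)) ((n : ℤ) - 1)) :
    dMinor k m n I hI hsub = dMinor k m n I' hI' hsub' := by
  subst h; rfl


/-- `E_{(m',n',m,n)}` maps the maximal minor `d_J` to `d_{J ∖ {-m',…,-m-1}}`
when `J ⊇ {-m',…,-m-1}` and the remaining rows lie in `{-m,…,n-1}`, and to `0` otherwise;
consequently it restricts to a surjection `k[δ_{m',n'}] → k[δ_{m,n}]`. -/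
theorem stmt0 (k : Type) [Field k] (m n m' n' : ℕ) (hm : 0 < m) (hn : 0 < n)
    (hmm : m ≤ m') (hnn : n ≤ n') :
    (∀ (J : Finset ℤ) (hJ : J.card = m')
        (hJsub : J ⊆ Finset.Icc (-(m' : ℤ)) ((n' : ℤ) - 1)),
      (∀ (_ : Finset.Icc (-(m' : ℤ)) (-(m : ℤ) - 1) ⊆ J)
          (hIsub : J \ Finset.Icc (-(m' : ℤ)) (-(m : ℤ) - 1) ⊆
            Finset.Icc (-(m : ℤ)) ((n : ℤ) - 1))
          (hI : (J \ Finset.Icc (-(m' : ℤ)) (-(m : ℤ) - 1)).card = m),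
        Emap k m n m' n' (dMinor k m' n' J hJ hJsub) =
          dMinor k m n (J \ Finset.Icc (-(m' : ℤ)) (-(m : ℤ) - 1)) hI hIsub) ∧
      (¬ (Finset.Icc (-(m' : ℤ)) (-(m : ℤ) - 1) ⊆ J ∧
          J \ Finset.Icc (-(m' : ℤ)) (-(m : ℤ) - 1) ⊆
            Finset.Icc (-(m : ℤ)) ((n : ℤ) - 1)) →
        Emap k m n m' n' (dMinor k m' n' J hJ hJsub) = 0)) ∧
    Subalgebra.map (Emap k m n m' n') (DeltaSub k m' n') = DeltaSub k m n := by
  constructor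
  · intro J hJ hJsub
    exact ⟨fun hsup hIsub hI => partA k m n m' n' hm hn hmm hnn J hJ hJsub hsup hIsub hI,
           fun hnot => partB k m n m' n' hm hn hmm hnn J hJ hJsub hnot⟩
  · rw [DeltaSub, DeltaSub, AlgHom.map_adjoin]
    apply le_antisymm
    · rw [Algebra.adjoin_le_iff]
      rintro x ⟨y, ⟨J, hJ, hJsub, rfl⟩, rfl⟩
      by_cases h : Finset.Icc (-(m' : ℤ)) (-(m : ℤ) - 1) ⊆ J ∧
          J \ Finset.Icc (-(m' : ℤ)) (-(m : ℤ) - 1) ⊆ Finset.Icc (-(m : ℤ)) ((n : ℤ) - 1)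
      · have hIcard : (J \ Finset.Icc (-(m' : ℤ)) (-(m : ℤ) - 1)).card = m := by
          rw [Finset.card_sdiff_of_subset h.1, hJ, card_icc m m' hmm]
          omega
        rw [partA k m n m' n' hm hn hmm hnn J hJ hJsub h.1 h.2 hIcard]
        exact Algebra.subset_adjoin ⟨_, hIcard, h.2, rfl⟩
      · rw [partB k m n m' n' hm hn hmm hnn J hJ hJsub h]
        exact Subalgebra.zero_mem _
    · rw [Algebra.adjoin_le_iff]
      rintro x ⟨I, hI, hIsub, rfl⟩
      set J := Finset.Icc (-(m' : ℤ)) (-(m : ℤ) - 1) ∪ I with hJdef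
      have hdisj : Disjoint (Finset.Icc (-(m' : ℤ)) (-(m : ℤ) - 1)) I := by
        rw [Finset.disjoint_left]
        intro a ha haI
        have h1 := hIsub haI
        simp only [Finset.mem_Icc] at ha h1
        omega
      have hJcard : J.card = m' := by
        rw [hJdef, Finset.card_union_of_disjoint hdisj, card_icc m m' hmm, hI]
        omega
      have hJsub : J ⊆ Finset.Icc (-(m' : ℤ)) ((n' : ℤ) - 1) := by
        rw [hJdef]
        apply Finset.union_subset
        · exact Finset.Icc_subset_Icc le_rfl (by omega)
        · intro a haI
          have h1 := hIsub haI
          simp only [Finset.mem_Icc] at h1 ⊢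
          omega
      have hsdiff : J \ Finset.Icc (-(m' : ℤ)) (-(m : ℤ) - 1) = I :=
        Finset.union_sdiff_cancel_left hdisj
      have hIsub' : J \ Finset.Icc (-(m' : ℤ)) (-(m : ℤ) - 1) ⊆
          Finset.Icc (-(m : ℤ)) ((n : ℤ) - 1) := by rw [hsdiff]; exact hIsub
      have hI' : (J \ Finset.Icc (-(m' : ℤ)) (-(m : ℤ) - 1)).card = m := by
        rw [hsdiff]; exact hI
      have key := partA k m n m' n' hm hn hmm hnn J hJcard hJsub
        Finset.subset_union_left hIsub' hI'
      rw [dMinor_congr k m n _ I hsdiff hI' hIsub' hI hIsub] at key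
      rw [← key]
      exact Algebra.subset_adjoin ⟨_, ⟨J, hJcard, hJsub, rfl⟩, rfl⟩


end
end

section
/- Let m' ≥ m and n' ≥ n be positive integers. There exists a (necessarily unique) k-algebra homomorphism r_{(m,n,m',n')} : k[δ_{m,n}] → k[δ_{m',n'}] such that r_{(m,n,m',n')}(d_{l_0...l_{m-1}}) = d_{-m',...,-m-1,l_0,...,l_{m-1}} for every strictly increasing tuple -m ≤ l_0 < ... < l_{m-1} ≤ n-1. Moreover e_{(m',n',m,n)} ∘ r_{(m,n,m',n')} is the identity of k[δ_{m,n}]; in particular r_{(m,n,m',n')} is injective. -/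
open MvPolynomial

noncomputable section

/-- The defining property of `r_{(m,n,m',n')}` on the maximal minors:
`r(d_{l_0…l_{m-1}}) = d_{-m',…,-m-1,l_0,…,l_{m-1}}`. -/
def rProp (k : Type) [Field k] (m n m' n' : ℕ)
    (r : ↥(DeltaSub k m n) →ₐ[k] ↥(DeltaSub k m' n')) : Prop :=
  ∀ (I : Finset ℤ) (hI : I.card = m)
    (hsub : I ⊆ Finset.Icc (-(m : ℤ)) ((n : ℤ) - 1))
    (hmem : dMinor k m n I hI hsub ∈ DeltaSub k m n)
    (hcard : (Finset.Icc (-(m' : ℤ)) (-(m : ℤ) - 1) ∪ I).card = m')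
    (hsub' : Finset.Icc (-(m' : ℤ)) (-(m : ℤ) - 1) ∪ I ⊆
      Finset.Icc (-(m' : ℤ)) ((n' : ℤ) - 1)),
    (r ⟨dMinor k m n I hI hsub, hmem⟩ : MatRing k m' n') =
      dMinor k m' n' (Finset.Icc (-(m' : ℤ)) (-(m : ℤ) - 1) ∪ I) hcard hsub'

/-!
Write `m' = d + m` and let `J = {-m', …, -m-1}`. Over the fraction field of `k[a]_{m',n'}`, the
generic block `A` on rows and columns `J` is invertible, and the Schur complement formula gives
`d_{J ∪ I} = det A · d_I(S)` for the Schur complement `S` of `A`. Substituting for `a` the matrix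
`S` with one column multiplied by `det A` is therefore a `k`-algebra map sending every `d_I` to
`d_{J ∪ I}`: each polynomial relation among the `d_I` also holds among the `d_{J ∪ I}`, and this
yields `r`. Conversely `e` maps `A` to the identity and the off-diagonal blocks to `0`, so
`e(d_{J ∪ I}) = d_I`; this gives `e ∘ r = id`, and uniqueness holds because the `d_I` generate.
-/

theorem Finset.orderEmbOfFin_union_finSumFinEquiv {α : Type*} [LinearOrder α] {p q : ℕ}
    {s t : Finset α} (h : (s ∪ t).card = p + q) {f : Fin p → α} {g : Fin q → α}
    (hf : StrictMono f) (hg : StrictMono g) (hfs : ∀ i, f i ∈ s) (hgt : ∀ j, g j ∈ t)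
    (hfg : ∀ i j, f i < g j) (z : Fin p ⊕ Fin q) :
    (s ∪ t).orderEmbOfFin h (finSumFinEquiv z) = Sum.elim f g z := by
  have hmono : StrictMono (Sum.elim f g ∘ finSumFinEquiv.symm) := by
    intro a b hab
    induction a using Fin.addCases <;> induction b using Fin.addCases
    all_goals simp only [Function.comp_apply, finSumFinEquiv_symm_apply_castAdd,
      finSumFinEquiv_symm_apply_natAdd, Sum.elim_inl, Sum.elim_inr]
    · exact hf hab
    · exact hfg _ _
    · exact absurd hab (by simp only [Fin.lt_def, Fin.val_natAdd, Fin.val_castAdd]; omega)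
    · exact hg (by simpa using hab)
  have hmem : ∀ i, (Sum.elim f g ∘ finSumFinEquiv.symm) i ∈ s ∪ t := by
    intro i
    induction i using Fin.addCases <;> simp [hfs, hgt]
  rw [← Finset.orderEmbOfFin_unique h hmem hmono]
  simp

namespace Matrix

theorem submatrix_sumElim {α β γ μ S : Type*} (x : Matrix α β S) (r₁ : γ → α)
    (c₁ : γ → β) (r₂ : μ → α) (c₂ : μ → β) :
    x.submatrix (Sum.elim r₁ r₂) (Sum.elim c₁ c₂) =
      fromBlocks (x.submatrix r₁ c₁) (x.submatrix r₁ c₂) (x.submatrix r₂ c₁)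
        (x.submatrix r₂ c₂) := by
  ext (i | i) (j | j) <;> rfl

variable {α β δ μ R : Type*} [Fintype δ] [DecidableEq δ] [CommRing R]

def schurComplement (x : Matrix α β R) (r : δ → α) (c : δ → β) : Matrix α β R :=
  x - x.submatrix id c * (x.submatrix r c)⁻¹ * x.submatrix r id

theorem det_submatrix_sumElim [Fintype μ] [DecidableEq μ] (x : Matrix α β R)
    (r₁ : δ → α) (c₁ : δ → β) (r₂ : μ → α) (c₂ : μ → β)
    (hA : IsUnit (x.submatrix r₁ c₁).det) :
    (x.submatrix (Sum.elim r₁ r₂) (Sum.elim c₁ c₂)).det =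
      (x.submatrix r₁ c₁).det * ((schurComplement x r₁ c₁).submatrix r₂ c₂).det := by
  let := invertibleOfIsUnitDet _ hA
  rw [submatrix_sumElim, det_fromBlocks₁₁, invOf_eq_nonsing_inv]
  rfl

end Matrix

theorem exists_algHom_adjoin_of_ker_le {R S T ι : Type*} [CommRing R] [CommRing S] [CommRing T]
    [Algebra R S] [Algebra R T] (E : T →ₐ[R] S) {f : ι → S} {g : ι → T}
    (hEg : ∀ i, E (g i) = f i) (hker : ∀ P : MvPolynomial ι R, aeval f P = 0 → aeval g P = 0)
    {A : Subalgebra R S} (hA : A = Algebra.adjoin R (Set.range f)) {B : Subalgebra R T}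
    (hB : ∀ i, g i ∈ B) :
    ∃ r : A →ₐ[R] B, ∀ i (hi : f i ∈ A), (r ⟨f i, hi⟩ : T) = g i := by
  subst hA
  have hinj : Function.Injective (E.comp (Algebra.adjoin R (Set.range g)).val) := by
    rw [injective_iff_map_eq_zero]
    rintro ⟨y, hy⟩ hy0
    rw [Algebra.adjoin_range_eq_range_aeval] at hy
    obtain ⟨P, rfl⟩ := hy
    have hP : aeval f P = 0 := by
      rw [← hy0]
      simp [comp_aeval_apply, hEg]
    exact Subtype.ext (hker P hP)
  have hrange : Algebra.adjoin R (Set.range f) =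
      (E.comp (Algebra.adjoin R (Set.range g)).val).range := by
    rw [AlgHom.range_comp, Subalgebra.range_val, AlgHom.map_adjoin, ← Set.range_comp]
    simp only [Function.comp_def, hEg]
  have hB' : Algebra.adjoin R (Set.range g) ≤ B := Algebra.adjoin_le (Set.range_subset_iff.mpr hB)
  refine ⟨(Subalgebra.inclusion hB').comp ((AlgEquiv.ofInjective _ hinj).symm.toAlgHom.comp
    (Subalgebra.equivOfEq _ _ hrange).toAlgHom), fun i hi => ?_⟩
  have hg : (AlgEquiv.ofInjective _ hinj).symm (Subalgebra.equivOfEq _ _ hrange ⟨f i, hi⟩) =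
      ⟨g i, Algebra.subset_adjoin ⟨i, rfl⟩⟩ := by
    rw [AlgEquiv.symm_apply_eq]
    exact Subtype.ext (hEg i).symm
  exact congrArg Subtype.val hg

namespace GenericMinors

variable (k : Type) [Field k]

def genericMatrix (m n : ℕ) : Matrix ℤ ℤ (MatRing k m n) :=
  Matrix.of fun i j =>
    if h : i ∈ Finset.Icc (-(m : ℤ)) ((n : ℤ) - 1) ∧ j ∈ Finset.Icc (-(m : ℤ)) (-1)
    then X (⟨i, h.1⟩, ⟨j, h.2⟩)
    else 0

def colIdx (m : ℕ) (t : Fin m) : ℤ := -(m : ℤ) + t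

/-- The indices `-m', …, -m-1` of the rows and columns added in passing to `m' = d + m`. -/
def extraIdx (m d : ℕ) (v : Fin d) : ℤ := -((d + m : ℕ) : ℤ) + v

variable {k}

theorem genericMatrix_apply {m n : ℕ} (p : RowI m n × ColI m) :
    genericMatrix k m n p.1 p.2 = X p := by
  rw [genericMatrix, Matrix.of_apply, dif_pos ⟨p.1.2, p.2.2⟩]

theorem dMinor_eq_det_submatrix {m n : ℕ} {I : Finset ℤ} (hI : I.card = m)
    (hsub : I ⊆ Finset.Icc (-(m : ℤ)) ((n : ℤ) - 1)) :
    dMinor k m n I hI hsub =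
      ((genericMatrix k m n).submatrix (I.orderEmbOfFin hI) (colIdx m)).det := by
  rw [dMinor]
  congr 1
  exact Matrix.ext fun s t => (genericMatrix_apply (_, _)).symm

theorem card_Icc_union {m m' n : ℕ} (hmm : m ≤ m') {I : Finset ℤ} (hI : I.card = m)
    (hsub : I ⊆ Finset.Icc (-(m : ℤ)) ((n : ℤ) - 1)) :
    (Finset.Icc (-(m' : ℤ)) (-(m : ℤ) - 1) ∪ I).card = m' := by
  rw [Finset.card_union_of_disjoint, Int.card_Icc, hI]
  · omega
  · rw [Finset.disjoint_left]
    intro x hx hxI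
    have := Finset.mem_Icc.mp (hsub hxI)
    simp only [Finset.mem_Icc] at hx
    omega

theorem Icc_union_subset {m m' n n' : ℕ} (hmm : m ≤ m') (hnn : n ≤ n') {I : Finset ℤ}
    (hsub : I ⊆ Finset.Icc (-(m : ℤ)) ((n : ℤ) - 1)) :
    Finset.Icc (-(m' : ℤ)) (-(m : ℤ) - 1) ∪ I ⊆
      Finset.Icc (-(m' : ℤ)) ((n' : ℤ) - 1) := by
  refine Finset.union_subset (Finset.Icc_subset_Icc le_rfl (by omega)) (hsub.trans ?_)
  exact Finset.Icc_subset_Icc (by omega) (by omega)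

variable {m n d n' : ℕ}

theorem dMinor_Icc_union {I : Finset ℤ} (hI : I.card = m)
    (hsub : I ⊆ Finset.Icc (-(m : ℤ)) ((n : ℤ) - 1))
    (hc : (Finset.Icc (-((d + m : ℕ) : ℤ)) (-(m : ℤ) - 1) ∪ I).card = d + m)
    (hs : Finset.Icc (-((d + m : ℕ) : ℤ)) (-(m : ℤ) - 1) ∪ I ⊆
      Finset.Icc (-((d + m : ℕ) : ℤ)) ((n' : ℤ) - 1)) :
    dMinor k (d + m) n' _ hc hs = ((genericMatrix k (d + m) n').submatrix
      (Sum.elim (extraIdx m d) (I.orderEmbOfFin hI)) (Sum.elim (extraIdx m d) (colIdx m))).det := by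
  rw [dMinor_eq_det_submatrix, ← Matrix.det_submatrix_equiv_self finSumFinEquiv,
    Matrix.submatrix_submatrix]
  congr 1
  refine Matrix.ext fun z w => ?_
  simp only [Matrix.submatrix_apply, Function.comp_apply]
  congr 2
  · refine Finset.orderEmbOfFin_union_finSumFinEquiv hc
      (fun a b hab => by simpa [extraIdx] using hab) (I.orderEmbOfFin hI).strictMono
      (fun v => ?_) (I.orderEmbOfFin_mem hI) (fun v s => ?_) z
    · simp only [extraIdx, Finset.mem_Icc]; omega
    · have := Finset.mem_Icc.mp (hsub (I.orderEmbOfFin_mem hI s))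
      simp only [extraIdx]; omega
  · rcases w with v | t <;> simp [colIdx, extraIdx]

theorem emap_genericMatrix {m' : ℕ} {i j : ℤ} (hi : -(m' : ℤ) ≤ i ∧ i ≤ n' - 1)
    (hj : -(m' : ℤ) ≤ j ∧ j ≤ -1) :
    Emap k m n m' n' (genericMatrix k m' n' i j) =
      if (-(m : ℤ) ≤ i ∧ i ≤ n - 1) ∧ (-(m : ℤ) ≤ j ∧ j ≤ -1) then
        genericMatrix k m n i j
      else if i = j then 1 else 0 := by
  rw [genericMatrix, Matrix.of_apply, dif_pos (by simpa only [Finset.mem_Icc] using ⟨hi, hj⟩),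
    Emap, aeval_X]
  simp only [Finset.mem_Icc]
  split_ifs with h
  · exact (genericMatrix_apply (_, _)).symm
  all_goals rfl

theorem emap_mapMatrix_submatrix_extraIdx :
    (Emap k m n (d + m) n').mapMatrix
      ((genericMatrix k (d + m) n').submatrix (extraIdx m d) (extraIdx m d)) = 1 := by
  refine Matrix.ext fun u v => ?_
  have := u.2
  have := v.2
  rw [AlgHom.mapMatrix_apply, Matrix.map_apply, Matrix.submatrix_apply, extraIdx, extraIdx,
    emap_genericMatrix (by omega) (by omega), if_neg (by omega), Matrix.one_apply]
  simp [Fin.ext_iff]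

theorem emap_mapMatrix_submatrix_sumElim (hnn : n ≤ n') {I : Finset ℤ} (hI : I.card = m)
    (hsub : I ⊆ Finset.Icc (-(m : ℤ)) ((n : ℤ) - 1)) :
    (Emap k m n (d + m) n').mapMatrix ((genericMatrix k (d + m) n').submatrix
      (Sum.elim (extraIdx m d) (I.orderEmbOfFin hI)) (Sum.elim (extraIdx m d) (colIdx m))) =
    Matrix.fromBlocks 1 0 0 ((genericMatrix k m n).submatrix (I.orderEmbOfFin hI) (colIdx m)) := by
  rw [AlgHom.mapMatrix_apply, Matrix.submatrix_sumElim, Matrix.fromBlocks_map,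
    ← AlgHom.mapMatrix_apply, emap_mapMatrix_submatrix_extraIdx]
  have hI' := fun s => Finset.mem_Icc.mp (hsub (I.orderEmbOfFin_mem hI s))
  congr 1 <;> refine Matrix.ext fun u v => ?_ <;> have := u.2 <;> have := v.2 <;>
    simp only [Matrix.map_apply, Matrix.submatrix_apply, Matrix.zero_apply, extraIdx, colIdx]
  · rw [emap_genericMatrix (by omega) (by omega), if_neg (by omega), if_neg (by omega)]
  · have := hI' u
    rw [emap_genericMatrix (by omega) (by omega), if_neg (by omega), if_neg (by omega)]
  · have := hI' u
    rw [emap_genericMatrix (by omega) (by omega), if_pos (by omega)]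

theorem emap_dMinor_Icc_union (hnn : n ≤ n') {I : Finset ℤ} (hI : I.card = m)
    (hsub : I ⊆ Finset.Icc (-(m : ℤ)) ((n : ℤ) - 1))
    (hc : (Finset.Icc (-((d + m : ℕ) : ℤ)) (-(m : ℤ) - 1) ∪ I).card = d + m)
    (hs : Finset.Icc (-((d + m : ℕ) : ℤ)) (-(m : ℤ) - 1) ∪ I ⊆
      Finset.Icc (-((d + m : ℕ) : ℤ)) ((n' : ℤ) - 1)) :
    Emap k m n (d + m) n' (dMinor k (d + m) n' _ hc hs) = dMinor k m n I hI hsub := by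
  rw [dMinor_Icc_union hI hsub, AlgHom.map_det, emap_mapMatrix_submatrix_sumElim hnn hI hsub,
    Matrix.det_fromBlocks_zero₂₁, Matrix.det_one, one_mul, dMinor_eq_det_submatrix]

theorem det_submatrix_extraIdx_ne_zero :
    ((genericMatrix k (d + m) n').submatrix (extraIdx m d) (extraIdx m d)).det ≠ 0 := by
  intro h
  have := congrArg (Emap k m 0 (d + m) n') h
  rw [AlgHom.map_det, emap_mapMatrix_submatrix_extraIdx, Matrix.det_one, map_zero] at this
  exact one_ne_zero this

variable (k m n d n')

def genericMatrixFrac : Matrix ℤ ℤ (FractionRing (MatRing k (d + m) n')) :=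
  (genericMatrix k (d + m) n').map (algebraMap _ _)

/-- Multiplying column `-m` of the Schur complement by `det A` makes `d_I` go to
`det A · d_I(S) = d_{J ∪ I}`. -/
def pivotSubstitution : MatRing k m n →ₐ[k] FractionRing (MatRing k (d + m) n') :=
  let x := genericMatrixFrac k m d n'
  aeval fun p =>
    (if (p.2 : ℤ) = -m then (x.submatrix (extraIdx m d) (extraIdx m d)).det else 1) *
      x.schurComplement (extraIdx m d) (extraIdx m d) p.1 p.2

variable {k m n d n'}

theorem pivotSubstitution_dMinor (hm : 0 < m) {I : Finset ℤ} (hI : I.card = m)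
    (hsub : I ⊆ Finset.Icc (-(m : ℤ)) ((n : ℤ) - 1))
    (hc : (Finset.Icc (-((d + m : ℕ) : ℤ)) (-(m : ℤ) - 1) ∪ I).card = d + m)
    (hs : Finset.Icc (-((d + m : ℕ) : ℤ)) (-(m : ℤ) - 1) ∪ I ⊆
      Finset.Icc (-((d + m : ℕ) : ℤ)) ((n' : ℤ) - 1)) :
    pivotSubstitution k m n d n' (dMinor k m n I hI hsub) =
      algebraMap _ _ (dMinor k (d + m) n' _ hc hs) := by
  have hA : IsUnit ((genericMatrixFrac k m d n').submatrix (extraIdx m d) (extraIdx m d)).det := by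
    rw [isUnit_iff_ne_zero, genericMatrixFrac, Matrix.submatrix_map, ← RingHom.mapMatrix_apply,
      ← RingHom.map_det]
    exact (map_ne_zero_iff _ (IsFractionRing.injective _ _)).mpr det_submatrix_extraIdx_ne_zero
  rw [dMinor_Icc_union hI hsub, RingHom.map_det, RingHom.mapMatrix_apply, ← Matrix.submatrix_map,
    ← genericMatrixFrac, Matrix.det_submatrix_sumElim _ _ _ _ _ hA, dMinor_eq_det_submatrix,
    AlgHom.map_det]
  set a := ((genericMatrixFrac k m d n').submatrix (extraIdx m d) (extraIdx m d)).det
  set M : Matrix (Fin m) (Fin m) _ := ((genericMatrixFrac k m d n').schurComplement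
    (extraIdx m d) (extraIdx m d)).submatrix (I.orderEmbOfFin hI) (colIdx m)
  have hentry : (pivotSubstitution k m n d n').mapMatrix
      ((genericMatrix k m n).submatrix (I.orderEmbOfFin hI) (colIdx m)) =
        Matrix.of fun s t => (if t = ⟨0, hm⟩ then a else 1) * M s t := by
    refine Matrix.ext fun s t => ?_
    have := Finset.mem_Icc.mp (hsub (I.orderEmbOfFin_mem hI s))
    have := t.2
    rw [AlgHom.mapMatrix_apply, Matrix.map_apply, Matrix.submatrix_apply, genericMatrix,
      Matrix.of_apply, dif_pos (by simp only [colIdx, Finset.mem_Icc]; omega), pivotSubstitution,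
      aeval_X]
    simp [a, M, colIdx, Fin.ext_iff]
  rw [hentry, Matrix.det_mul_row]
  simp

variable (k m n d n')

def MinorIndex : Type :=
  {I : Finset ℤ // I.card = m ∧ I ⊆ Finset.Icc (-(m : ℤ)) ((n : ℤ) - 1)}

def minor (i : MinorIndex m n) : MatRing k m n := dMinor k m n i.1 i.2.1 i.2.2

def extendedMinor (hnn : n ≤ n') (i : MinorIndex m n) : MatRing k (d + m) n' :=
  dMinor k (d + m) n' _ (card_Icc_union (Nat.le_add_left m d) i.2.1 i.2.2)
    (Icc_union_subset (Nat.le_add_left m d) hnn i.2.2)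

variable {k m n d n'}

theorem deltaSub_eq_adjoin_range_minor :
    DeltaSub k m n = Algebra.adjoin k (Set.range (minor k m n)) := by
  rw [DeltaSub]
  congr 1
  ext x
  constructor
  · rintro ⟨I, hI, hsub, rfl⟩
    exact ⟨⟨I, hI, hsub⟩, rfl⟩
  · rintro ⟨⟨I, hI, hsub⟩, rfl⟩
    exact ⟨I, hI, hsub, rfl⟩

theorem aeval_extendedMinor_eq_zero (hm : 0 < m) (hnn : n ≤ n')
    {P : MvPolynomial (MinorIndex m n) k} (hP : aeval (minor k m n) P = 0) :
    aeval (extendedMinor k m n d n' hnn) P = 0 := by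
  rw [← aeval_algebraMap_eq_zero_iff_of_injective (B := FractionRing (MatRing k (d + m) n'))
    (IsFractionRing.injective _ _)]
  have : algebraMap _ _ ∘ extendedMinor k m n d n' hnn =
      pivotSubstitution k m n d n' ∘ minor k m n :=
    funext fun i => (pivotSubstitution_dMinor hm i.2.1 i.2.2 _ _).symm
  rw [this, Function.comp_def, ← comp_aeval_apply, hP, map_zero]

theorem exists_rProp (hm : 0 < m) (hnn : n ≤ n') : ∃ r, rProp k m n (d + m) n' r := by
  obtain ⟨r, hr⟩ := exists_algHom_adjoin_of_ker_le (Emap k m n (d + m) n')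
    (fun i => emap_dMinor_Icc_union hnn i.2.1 i.2.2 _ _)
    (fun P => aeval_extendedMinor_eq_zero (d := d) hm hnn) deltaSub_eq_adjoin_range_minor
    (B := DeltaSub k (d + m) n') (fun i => Algebra.subset_adjoin ⟨_, _, _, rfl⟩)
  exact ⟨r, fun I hI hsub hmem _ _ => hr ⟨I, hI, hsub⟩ hmem⟩

end GenericMinors

open GenericMinors

theorem rProp.unique {k : Type} [Field k] {m n m' n' : ℕ} (hmm : m ≤ m') (hnn : n ≤ n')
    {r₁ r₂ : DeltaSub k m n →ₐ[k] DeltaSub k m' n'} (h₁ : rProp k m n m' n' r₁)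
    (h₂ : rProp k m n m' n' r₂) : r₁ = r₂ := by
  refine AlgHom.ext_of_eq_adjoin rfl ?_
  rintro _ ⟨I, hI, hsub, rfl⟩
  have hc := card_Icc_union hmm hI hsub
  have hs := Icc_union_subset hmm hnn hsub
  exact Subtype.ext ((h₁ I hI hsub _ hc hs).trans (h₂ I hI hsub _ hc hs).symm)

theorem rProp.emap_apply {k : Type} [Field k] {m n d n' : ℕ} (hnn : n ≤ n')
    {r : DeltaSub k m n →ₐ[k] DeltaSub k (d + m) n'} (hr : rProp k m n (d + m) n' r)
    (x : DeltaSub k m n) : Emap k m n (d + m) n' (r x) = x := by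
  have : (Emap k m n (d + m) n').comp ((DeltaSub k (d + m) n').val.comp r) =
      (DeltaSub k m n).val := by
    refine AlgHom.ext_of_eq_adjoin rfl ?_
    rintro _ ⟨I, hI, hsub, rfl⟩
    have hc := card_Icc_union (Nat.le_add_left m d) hI hsub
    have hs := Icc_union_subset (Nat.le_add_left m d) hnn hsub
    exact (congrArg (Emap k m n (d + m) n') (hr I hI hsub _ hc hs)).trans
      (emap_dMinor_Icc_union hnn hI hsub _ _)
  exact AlgHom.congr_fun this x

theorem stmt1_general (k : Type) [Field k] (m n m' n' : ℕ) (hm : 0 < m)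
    (hmm : m ≤ m') (hnn : n ≤ n') :
    (∃! r : ↥(DeltaSub k m n) →ₐ[k] ↥(DeltaSub k m' n'), rProp k m n m' n' r) ∧
    (∀ r : ↥(DeltaSub k m n) →ₐ[k] ↥(DeltaSub k m' n'), rProp k m n m' n' r →
      (∀ x : ↥(DeltaSub k m n),
        Emap k m n m' n' ((r x : MatRing k m' n')) = (x : MatRing k m n)) ∧
      Function.Injective r) := by
  obtain ⟨d, rfl⟩ : ∃ d, m' = d + m := ⟨m' - m, by omega⟩
  obtain ⟨r, hr⟩ := exists_rProp (k := k) (d := d) hm hnn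
  refine ⟨⟨r, hr, fun r' hr' => hr'.unique hmm hnn hr⟩,
    fun r hr => ⟨hr.emap_apply hnn, fun x y hxy => ?_⟩⟩
  rw [Subtype.ext_iff, ← hr.emap_apply hnn x, ← hr.emap_apply hnn y, hxy]

/-- there is a unique `k`-algebra homomorphism
`r_{(m,n,m',n')} : k[δ_{m,n}] → k[δ_{m',n'}]` sending `d_{l_0…l_{m-1}}` to
`d_{-m',…,-m-1,l_0,…,l_{m-1}}`; moreover `e_{(m',n',m,n)} ∘ r_{(m,n,m',n')} = id`,
and in particular `r_{(m,n,m',n')}` is injective. -/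
theorem stmt1 (k : Type) [Field k] (m n m' n' : ℕ) (hm : 0 < m) (hn : 0 < n)
    (hmm : m ≤ m') (hnn : n ≤ n') :
    (∃! r : ↥(DeltaSub k m n) →ₐ[k] ↥(DeltaSub k m' n'), rProp k m n m' n' r) ∧
    (∀ r : ↥(DeltaSub k m n) →ₐ[k] ↥(DeltaSub k m' n'), rProp k m n m' n' r →
      (∀ x : ↥(DeltaSub k m n),
        Emap k m n m' n' ((r x : MatRing k m' n')) = (x : MatRing k m n)) ∧
      Function.Injective r) :=
  stmt1_general k m n m' n' hm hmm hnn
end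
end

section
/- There is a unique ring homomorphism I : k[δ_∞] → k̂[δ_∞] such that for all pairs (M,N) and (m,n) with M ≥ m and N ≥ n, and all y ∈ k[δ_{M,N}], the (m,n)-component of I(r_{(M,N)}(y)) equals e_{(M,N,m,n)}(y). Moreover I is injective. -/
open MvPolynomial

set_option maxHeartbeats 2000000
set_option synthInstance.maxHeartbeats 400000

noncomputable section

/-- The inverse limit of an inverse system of rings, realized concretely as the
subring of the product consisting of the compatible families. -/
def ringInvLim {ι : Type*} [Preorder ι] (G : ι → Type*) [∀ i, Ring (G i)]
    (f : ∀ i j : ι, i ≤ j → (G j →+* G i)) : Subring (∀ i, G i) where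
  carrier := {x | ∀ (i j : ι) (h : i ≤ j), f i j h (x j) = x i}
  zero_mem' := by intro i j h; simp
  one_mem' := by intro i j h; simp
  add_mem' := by
    intro a b ha hb i j h
    simp only [Pi.add_apply, map_add, ha i j h, hb i j h]
  mul_mem' := by
    intro a b ha hb i j h
    simp only [Pi.mul_apply, map_mul, ha i j h, hb i j h]
  neg_mem' := by
    intro a ha i j h
    simp only [Pi.neg_apply, map_neg, ha i j h]

/-- The index set: pairs of positive integers, ordered componentwise. -/
abbrev PIdx : Type := {p : ℕ × ℕ // 0 < p.1 ∧ 0 < p.2}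

/-- `e_{(m',n',m,n)}` viewed as a map `k[δ_{m',n'}] → k[δ_{m,n}]`: its defining property
is that it is the restriction of the substitution homomorphism `E_{(m',n',m,n)}`. -/
def eProp (k : Type) [Field k]
    (eD : ∀ p q : PIdx, p ≤ q →
      (↥(DeltaSub k q.1.1 q.1.2) →ₐ[k] ↥(DeltaSub k p.1.1 p.1.2))) : Prop :=
  ∀ (p q : PIdx) (h : p ≤ q) (x : ↥(DeltaSub k q.1.1 q.1.2)),
    (eD p q h x : MatRing k p.1.1 p.1.2) =
      Emap k p.1.1 p.1.2 q.1.1 q.1.2 (x : MatRing k q.1.1 q.1.2)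

/-- The defining property of the system of maps `r_{(m,n,m',n')}` on maximal minors. -/
def rSysProp (k : Type) [Field k]
    (rS : ∀ p q : PIdx, p ≤ q →
      (↥(DeltaSub k p.1.1 p.1.2) →ₐ[k] ↥(DeltaSub k q.1.1 q.1.2))) : Prop :=
  ∀ (p q : PIdx) (h : p ≤ q) (I : Finset ℤ) (hI : I.card = p.1.1)
    (hsub : I ⊆ Finset.Icc (-(p.1.1 : ℤ)) ((p.1.2 : ℤ) - 1))
    (hmem : dMinor k p.1.1 p.1.2 I hI hsub ∈ DeltaSub k p.1.1 p.1.2)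
    (hcard : (Finset.Icc (-(q.1.1 : ℤ)) (-(p.1.1 : ℤ) - 1) ∪ I).card = q.1.1)
    (hsub' : Finset.Icc (-(q.1.1 : ℤ)) (-(p.1.1 : ℤ) - 1) ∪ I ⊆
      Finset.Icc (-(q.1.1 : ℤ)) ((q.1.2 : ℤ) - 1)),
    (rS p q h ⟨dMinor k p.1.1 p.1.2 I hI hsub, hmem⟩ : MatRing k q.1.1 q.1.2) =
      dMinor k q.1.1 q.1.2 (Finset.Icc (-(q.1.1 : ℤ)) (-(p.1.1 : ℤ) - 1) ∪ I) hcard hsub'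

/-!
The map is the lift of the cone maps `k[δ_q] → k̂[δ_∞]` whose `p`-component is
`e_{(p ⊔ q, p)} ∘ r_{(q, p ⊔ q)}`. Everything rests on `e_{(q,p)} ∘ r_{(p,q)} = id`: the
substitution `E` sends the padding rows `-M, …, -m-1` of a padded minor to the first standard
basis vectors, so it turns that minor into a block-diagonal determinant `det 1 · d_I`. With the
functoriality of `E` and of `r` this makes the components independent of the chosen upper bound
and compatible with both systems. Uniqueness holds because the index set is directed, and
injectivity because the `q`-component of the image of `r_q(y)` is `y` itself.
-/

lemma Fin.strictMono_append {α : Type*} [Preorder α] {d m : ℕ} {u : Fin d → α} {v : Fin m → α}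
    (hu : StrictMono u) (hv : StrictMono v) (huv : ∀ i j, u i < v j) :
    StrictMono (Fin.append u v) := by
  intro x y hxy
  cases x using Fin.addCases <;> cases y using Fin.addCases <;>
    simp only [Fin.append_left, Fin.append_right, Fin.lt_def, Fin.val_castAdd, Fin.val_natAdd]
      at hxy ⊢
  · exact hu (Fin.lt_def.2 hxy)
  · exact huv _ _
  · omega
  · exact hv (Fin.lt_def.2 (by omega))

lemma Finset.orderEmbOfFin_union_of_forall_lt {α : Type*} [LinearOrder α] {A B : Finset α}
    (hAB : ∀ a ∈ A, ∀ b ∈ B, a < b) {d m : ℕ} (hA : A.card = d) (hB : B.card = m)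
    (h : (A ∪ B).card = d + m) :
    ⇑((A ∪ B).orderEmbOfFin h) = Fin.append (A.orderEmbOfFin hA) (B.orderEmbOfFin hB) := by
  refine (Finset.orderEmbOfFin_unique h (fun x => ?_) ?_).symm
  · cases x using Fin.addCases <;> simp only [Fin.append_left, Fin.append_right]
    · exact Finset.mem_union_left _ (Finset.orderEmbOfFin_mem _ _ _)
    · exact Finset.mem_union_right _ (Finset.orderEmbOfFin_mem _ _ _)
  · exact Fin.strictMono_append (OrderEmbedding.strictMono _) (OrderEmbedding.strictMono _)
      fun i j => hAB _ (Finset.orderEmbOfFin_mem _ _ _) _ (Finset.orderEmbOfFin_mem _ _ _)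

lemma Finset.orderEmbOfFin_Icc_int {a b : ℤ} {d : ℕ} (h : (Finset.Icc a b).card = d)
    (i : Fin d) : (Finset.Icc a b).orderEmbOfFin h i = a + i := by
  refine (congrFun (Finset.orderEmbOfFin_unique h (f := fun i : Fin d => a + i)
    (fun i => ?_) fun i j hij => ?_) i).symm
  · have := i.2
    rw [Int.card_Icc] at h
    simp only [Finset.mem_Icc]
    omega
  · rw [Fin.lt_def] at hij
    show a + _ < a + _
    omega

section DirectToInverse

variable {ι : Type*} [Preorder ι] {G : ι → Type*} [∀ i, CommRing (G i)]
  {f : ∀ i j, i ≤ j → G i → G j} {e : ∀ i j : ι, i ≤ j → (G j →+* G i)}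

lemma ringHom_directLimit_ringInvLim_ext [IsDirectedOrder ι]
    {φ ψ : Ring.DirectLimit G f →+* ↥(ringInvLim G e)}
    (h : ∀ (j i : ι), i ≤ j → ∀ y : G j,
      (φ (Ring.DirectLimit.of G f j y) : ∀ i, G i) i =
        (ψ (Ring.DirectLimit.of G f j y) : ∀ i, G i) i) :
    φ = ψ := by
  refine Ring.DirectLimit.hom_ext _ fun j => RingHom.ext fun y => Subtype.ext ?_
  ext i
  obtain ⟨l, hil, hjl⟩ := directed_of (· ≤ ·) i j
  simp only [RingHom.comp_apply, ← Ring.DirectLimit.of_f hjl y]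
  exact h l i hil _

lemma injective_of_directLimit_of_apply_self [Nonempty ι] [IsDirectedOrder ι]
    (φ : Ring.DirectLimit G f →+* ↥(ringInvLim G e))
    (h : ∀ (j : ι) (y : G j), (φ (Ring.DirectLimit.of G f j y) : ∀ i, G i) j = y) :
    Function.Injective φ := by
  refine (injective_iff_map_eq_zero φ).2 fun z hz => ?_
  induction z using Ring.DirectLimit.induction_on with
  | ih j y => rw [← h j y, hz, ZeroMemClass.coe_zero, Pi.zero_apply, map_zero]

end DirectToInverse

section Emap

variable (k : Type) [Field k]

lemma emap_X (m n M N : ℕ) (v : RowI M N × ColI M) :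
    Emap k m n M N (X v) =
      if h : (v.1.1 ∈ Finset.Icc (-(m : ℤ)) ((n : ℤ) - 1)) ∧
          (v.2.1 ∈ Finset.Icc (-(m : ℤ)) (-1 : ℤ)) then
        (X (⟨v.1.1, h.1⟩, ⟨v.2.1, h.2⟩) : MatRing k m n)
      else if v.1.1 = v.2.1 then 1 else 0 :=
  aeval_X _ v

lemma emap_self (m n : ℕ) : Emap k m n m n = AlgHom.id k (MatRing k m n) :=
  algHom_ext fun v => by rw [emap_X, dif_pos ⟨v.1.2, v.2.2⟩]; rfl

lemma emap_comp_emap {m n m' n' : ℕ} (hm : m ≤ m') (hn : n ≤ n') (M N : ℕ) :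
    (Emap k m n m' n').comp (Emap k m' n' M N) = Emap k m n M N := by
  refine algHom_ext fun v => ?_
  rw [AlgHom.comp_apply, emap_X, emap_X]
  by_cases hsmall : (v.1.1 ∈ Finset.Icc (-(m : ℤ)) ((n : ℤ) - 1)) ∧
      (v.2.1 ∈ Finset.Icc (-(m : ℤ)) (-1 : ℤ))
  · have hbig : (v.1.1 ∈ Finset.Icc (-(m' : ℤ)) ((n' : ℤ) - 1)) ∧
        (v.2.1 ∈ Finset.Icc (-(m' : ℤ)) (-1 : ℤ)) := by
      simp only [Finset.mem_Icc] at hsmall ⊢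
      omega
    rw [dif_pos hbig, dif_pos hsmall, emap_X, dif_pos hsmall]
  · rw [dif_neg hsmall]
    by_cases hbig : (v.1.1 ∈ Finset.Icc (-(m' : ℤ)) ((n' : ℤ) - 1)) ∧
        (v.2.1 ∈ Finset.Icc (-(m' : ℤ)) (-1 : ℤ))
    · rw [dif_pos hbig, emap_X, dif_neg hsmall]
    · rw [dif_neg hbig]
      split_ifs <;> simp

lemma emap_emap {m n m' n' : ℕ} (hm : m ≤ m') (hn : n ≤ n') {M N : ℕ} (x : MatRing k M N) :
    Emap k m n m' n' (Emap k m' n' M N x) = Emap k m n M N x :=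
  DFunLike.congr_fun (emap_comp_emap k hm hn M N) x

end Emap

def padRows (M m : ℕ) : Finset ℤ := Finset.Icc (-(M : ℤ)) (-(m : ℤ) - 1)

section padRows

variable {m n M N : ℕ} {I : Finset ℤ}

lemma card_padRows (hm : m ≤ M) : (padRows M m).card = M - m := by
  rw [padRows, Int.card_Icc]
  omega

lemma padRows_lt (hsub : I ⊆ Finset.Icc (-(m : ℤ)) ((n : ℤ) - 1)) :
    ∀ a ∈ padRows M m, ∀ i ∈ I, a < i := fun a ha i hi => by
  have := Finset.mem_Icc.1 ha
  have := Finset.mem_Icc.1 (hsub hi)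
  omega

lemma card_padRows_union (hm : m ≤ M) (hI : I.card = m)
    (hsub : I ⊆ Finset.Icc (-(m : ℤ)) ((n : ℤ) - 1)) : (padRows M m ∪ I).card = M := by
  rw [Finset.card_union_of_disjoint, card_padRows hm, hI, Nat.sub_add_cancel hm]
  exact Finset.disjoint_left.2 fun a ha ha' => (padRows_lt hsub a ha a ha').false

lemma padRows_union_subset (hm : m ≤ M) (hn : n ≤ N)
    (hsub : I ⊆ Finset.Icc (-(m : ℤ)) ((n : ℤ) - 1)) :
    padRows M m ∪ I ⊆ Finset.Icc (-(M : ℤ)) ((N : ℤ) - 1) := by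
  intro a ha
  rcases Finset.mem_union.1 ha with h | h
  · have := Finset.mem_Icc.1 h
    simp only [Finset.mem_Icc]
    omega
  · have := Finset.mem_Icc.1 (hsub h)
    simp only [Finset.mem_Icc]
    omega

lemma padRows_union_padRows {m' : ℕ} (hm : m ≤ m') (hm' : m' ≤ M) :
    padRows M m' ∪ padRows m' m = padRows M m := by
  ext a
  simp only [padRows, Finset.mem_union, Finset.mem_Icc]
  omega

lemma orderEmbOfFin_padRows_union {d : ℕ} (hI : I.card = m)
    (hsub : I ⊆ Finset.Icc (-(m : ℤ)) ((n : ℤ) - 1)) (h : (padRows (d + m) m ∪ I).card = d + m) :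
    ⇑((padRows (d + m) m ∪ I).orderEmbOfFin h) =
      Fin.append (fun a : Fin d => -((d + m : ℕ) : ℤ) + a) (I.orderEmbOfFin hI) := by
  have hpad : (padRows (d + m) m).card = d := by
    rw [card_padRows (Nat.le_add_left m d), Nat.add_sub_cancel]
  rw [Finset.orderEmbOfFin_union_of_forall_lt (padRows_lt hsub) hpad hI]
  congr 1
  funext a
  exact Finset.orderEmbOfFin_Icc_int hpad a

end padRows

lemma dMinor_mem (k : Type) [Field k] {m n : ℕ} {I : Finset ℤ} (hI : I.card = m)
    (hsub : I ⊆ Finset.Icc (-(m : ℤ)) ((n : ℤ) - 1)) :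
    dMinor k m n I hI hsub ∈ DeltaSub k m n :=
  Algebra.subset_adjoin ⟨I, hI, hsub, rfl⟩

lemma DeltaSub.algHom_ext {k : Type} [Field k] {m n : ℕ} {B : Type*} [Semiring B] [Algebra k B]
    {φ ψ : ↥(DeltaSub k m n) →ₐ[k] B}
    (h : ∀ (I : Finset ℤ) (hI : I.card = m) (hsub : I ⊆ Finset.Icc (-(m : ℤ)) ((n : ℤ) - 1)),
      φ ⟨dMinor k m n I hI hsub, dMinor_mem k hI hsub⟩ =
        ψ ⟨dMinor k m n I hI hsub, dMinor_mem k hI hsub⟩) :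
    φ = ψ :=
  AlgHom.ext_of_eq_adjoin rfl fun _ ⟨I, hI, hsub, hx⟩ => by subst hx; exact h I hI hsub

lemma emap_dMinor_padRows_union (k : Type) [Field k] {m n M N : ℕ} (hm : m ≤ M)
    {I : Finset ℤ} (hI : I.card = m) (hsub : I ⊆ Finset.Icc (-(m : ℤ)) ((n : ℤ) - 1))
    (hJc : (padRows M m ∪ I).card = M)
    (hJs : padRows M m ∪ I ⊆ Finset.Icc (-(M : ℤ)) ((N : ℤ) - 1)) :
    Emap k m n M N (dMinor k M N (padRows M m ∪ I) hJc hJs) = dMinor k m n I hI hsub := by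
  obtain ⟨d, rfl⟩ := Nat.exists_eq_add_of_le' hm
  have hrows := orderEmbOfFin_padRows_union hI hsub hJc
  have hdiag (D : Matrix (Fin m) (Fin m) (MatRing k m n)) :
      (Matrix.fromBlocks 1 0 0 D : Matrix (Fin d ⊕ Fin m) (Fin d ⊕ Fin m) _).det = D.det := by
    rw [Matrix.det_fromBlocks_zero₂₁, Matrix.det_one, one_mul]
  rw [dMinor, dMinor, ← AlgHom.coe_toRingHom, RingHom.map_det,
    ← Matrix.det_submatrix_equiv_self finSumFinEquiv]
  refine (congrArg Matrix.det ?_).trans (hdiag _)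
  refine Matrix.ext fun i j => ?_
  rcases i with a | a <;> rcases j with b | b <;>
    simp only [Matrix.submatrix_apply, finSumFinEquiv_apply_left, finSumFinEquiv_apply_right,
      RingHom.mapMatrix_apply, Matrix.map_apply, Matrix.of_apply, AlgHom.coe_toRingHom, emap_X,
      hrows, Fin.append_left, Fin.append_right, Fin.val_castAdd, Fin.val_natAdd,
      Matrix.fromBlocks_apply₁₁, Matrix.fromBlocks_apply₁₂, Matrix.fromBlocks_apply₂₁,
      Matrix.fromBlocks_apply₂₂, Finset.mem_Icc]
  · have := a.2
    rw [dif_neg (by omega), Matrix.one_apply]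
    simp only [add_right_inj, Nat.cast_inj, Fin.val_inj]
  · have := a.2
    rw [dif_neg (by omega), if_neg (by omega)]
    rfl
  · have := b.2
    have := Finset.mem_Icc.1 (hsub (I.orderEmbOfFin_mem hI a))
    rw [dif_neg (by omega), if_neg (by omega)]
    rfl
  · have := b.2
    have := Finset.mem_Icc.1 (hsub (I.orderEmbOfFin_mem hI a))
    rw [dif_pos (by omega)]
    congr 3
    push_cast
    ring

def pidxSup (p q : PIdx) : PIdx :=
  ⟨(max p.1.1 q.1.1, max p.1.2 q.1.2), lt_max_of_lt_left p.2.1, lt_max_of_lt_left p.2.2⟩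

lemma le_pidxSup_left (p q : PIdx) : p ≤ pidxSup p q :=
  show p.1 ≤ (max p.1.1 q.1.1, max p.1.2 q.1.2) from ⟨le_max_left _ _, le_max_left _ _⟩

lemma le_pidxSup_right (p q : PIdx) : q ≤ pidxSup p q :=
  show q.1 ≤ (max p.1.1 q.1.1, max p.1.2 q.1.2) from ⟨le_max_right _ _, le_max_right _ _⟩

instance : Nonempty PIdx := ⟨⟨(1, 1), one_pos, one_pos⟩⟩

instance : IsDirectedOrder PIdx :=
  ⟨fun p q => ⟨pidxSup p q, le_pidxSup_left p q, le_pidxSup_right p q⟩⟩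

section TransitionMaps

variable {k : Type} [Field k]
  {rS : ∀ p q : PIdx, p ≤ q → (↥(DeltaSub k p.1.1 p.1.2) →ₐ[k] ↥(DeltaSub k q.1.1 q.1.2))}

lemma rS_dMinor (hrS : rSysProp k rS) {p q : PIdx} (h : p ≤ q) {I : Finset ℤ}
    (hI : I.card = p.1.1) (hsub : I ⊆ Finset.Icc (-(p.1.1 : ℤ)) ((p.1.2 : ℤ) - 1)) :
    rS p q h ⟨dMinor k p.1.1 p.1.2 I hI hsub, dMinor_mem k hI hsub⟩ =
      ⟨dMinor k q.1.1 q.1.2 (padRows q.1.1 p.1.1 ∪ I) (card_padRows_union h.1 hI hsub)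
        (padRows_union_subset h.1 h.2 hsub), dMinor_mem k _ _⟩ :=
  Subtype.ext (hrS p q h I hI hsub _ _ (padRows_union_subset h.1 h.2 hsub))

lemma emap_rS (hrS : rSysProp k rS) {p q : PIdx} (h : p ≤ q) (y : ↥(DeltaSub k p.1.1 p.1.2)) :
    Emap k p.1.1 p.1.2 q.1.1 q.1.2 (rS p q h y) = y := by
  suffices ((Emap k p.1.1 p.1.2 q.1.1 q.1.2).comp ((DeltaSub k q.1.1 q.1.2).val.comp (rS p q h)))
      = (DeltaSub k p.1.1 p.1.2).val from DFunLike.congr_fun this y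
  refine DeltaSub.algHom_ext fun I hI hsub => ?_
  simp only [AlgHom.comp_apply, rS_dMinor hrS h hI hsub]
  exact emap_dMinor_padRows_union k h.1 hI hsub _ (padRows_union_subset h.1 h.2 hsub)

lemma rS_rS (hrS : rSysProp k rS) {p q r : PIdx} (hpq : p ≤ q) (hqr : q ≤ r)
    (y : ↥(DeltaSub k p.1.1 p.1.2)) :
    rS q r hqr (rS p q hpq y) = rS p r (hpq.trans hqr) y := by
  suffices (rS q r hqr).comp (rS p q hpq) = rS p r (hpq.trans hqr) from
    DFunLike.congr_fun this y
  refine DeltaSub.algHom_ext fun I hI hsub => ?_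
  rw [AlgHom.comp_apply, rS_dMinor hrS hpq hI hsub, rS_dMinor hrS hqr, rS_dMinor hrS]
  congr 2
  rw [← Finset.union_assoc, padRows_union_padRows hpq.1 hqr.1]

lemma emap_rS_of_le (hrS : rSysProp k rS) {p q r : PIdx} (hpq : p ≤ q) (hqr : q ≤ r)
    (y : ↥(DeltaSub k q.1.1 q.1.2)) :
    Emap k p.1.1 p.1.2 r.1.1 r.1.2 (rS q r hqr y) = Emap k p.1.1 p.1.2 q.1.1 q.1.2 y := by
  rw [← emap_emap k hpq.1 hpq.2, emap_rS hrS]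

lemma emap_rS_eq_emap_rS (hrS : rSysProp k rS) {p q r r' : PIdx} (hpr : p ≤ r) (hqr : q ≤ r)
    (hpr' : p ≤ r') (hqr' : q ≤ r') (y : ↥(DeltaSub k q.1.1 q.1.2)) :
    Emap k p.1.1 p.1.2 r.1.1 r.1.2 (rS q r hqr y) =
      Emap k p.1.1 p.1.2 r'.1.1 r'.1.2 (rS q r' hqr' y) := by
  have hr := le_pidxSup_left r r'
  have hr' := le_pidxSup_right r r'
  rw [← emap_rS_of_le hrS hpr hr, rS_rS hrS, ← emap_rS_of_le hrS hpr' hr', rS_rS hrS]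

end TransitionMaps

section Construction

variable {k : Type} [Field k]
  {eD : ∀ p q : PIdx, p ≤ q → (↥(DeltaSub k q.1.1 q.1.2) →ₐ[k] ↥(DeltaSub k p.1.1 p.1.2))}
  {rS : ∀ p q : PIdx, p ≤ q → (↥(DeltaSub k p.1.1 p.1.2) →ₐ[k] ↥(DeltaSub k q.1.1 q.1.2))}

lemma coe_eD (heD : eProp k eD) {p q : PIdx} (h : p ≤ q) (x : ↥(DeltaSub k q.1.1 q.1.2)) :
    (eD p q h x : MatRing k p.1.1 p.1.2) = Emap k p.1.1 p.1.2 q.1.1 q.1.2 x :=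
  heD p q h x

lemma mem_ringInvLim_eD_rS (heD : eProp k eD) (hrS : rSysProp k rS) (q : PIdx)
    (y : ↥(DeltaSub k q.1.1 q.1.2)) :
    (fun p => eD p (pidxSup p q) (le_pidxSup_left p q)
      (rS q (pidxSup p q) (le_pidxSup_right p q) y)) ∈
      ringInvLim (fun p : PIdx => ↥(DeltaSub k p.1.1 p.1.2)) (fun p q h => (eD p q h).toRingHom) :=
  fun i j hij => Subtype.ext <| by
    simp only [AlgHom.toRingHom_eq_coe, RingHom.coe_coe, coe_eD heD]
    rw [emap_emap k hij.1 hij.2]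
    exact emap_rS_eq_emap_rS hrS (hij.trans (le_pidxSup_left j q)) _ (le_pidxSup_left i q) _ y

def toRingInvLim (heD : eProp k eD) (hrS : rSysProp k rS) (q : PIdx) :
    ↥(DeltaSub k q.1.1 q.1.2) →+*
      ↥(ringInvLim (fun p : PIdx => ↥(DeltaSub k p.1.1 p.1.2))
        (fun p q h => (eD p q h).toRingHom)) :=
  (RingHom.pi fun p => ((eD p (pidxSup p q) (le_pidxSup_left p q)).comp
    (rS q (pidxSup p q) (le_pidxSup_right p q))).toRingHom).codRestrict _
      (mem_ringInvLim_eD_rS heD hrS q)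

lemma coe_toRingInvLim_apply (heD : eProp k eD) (hrS : rSysProp k rS) (q : PIdx)
    (y : ↥(DeltaSub k q.1.1 q.1.2)) (p : PIdx) :
    ((toRingInvLim heD hrS q y : ∀ p : PIdx, ↥(DeltaSub k p.1.1 p.1.2)) p : MatRing k p.1.1 p.1.2) =
      Emap k p.1.1 p.1.2 (pidxSup p q).1.1 (pidxSup p q).1.2
        (rS q (pidxSup p q) (le_pidxSup_right p q) y) :=
  coe_eD heD _ _

lemma toRingInvLim_rS (heD : eProp k eD) (hrS : rSysProp k rS) {q q' : PIdx} (h : q ≤ q')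
    (y : ↥(DeltaSub k q.1.1 q.1.2)) :
    toRingInvLim heD hrS q' (rS q q' h y) = toRingInvLim heD hrS q y := by
  refine Subtype.ext <| funext fun p => Subtype.ext ?_
  rw [coe_toRingInvLim_apply, coe_toRingInvLim_apply, rS_rS hrS]
  exact emap_rS_eq_emap_rS hrS (le_pidxSup_left p q') _ (le_pidxSup_left p q) _ y

def directLimitToRingInvLim (heD : eProp k eD) (hrS : rSysProp k rS) :
    Ring.DirectLimit (fun p : PIdx => ↥(DeltaSub k p.1.1 p.1.2)) (fun p q h => ⇑(rS p q h)) →+*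
      ↥(ringInvLim (fun p : PIdx => ↥(DeltaSub k p.1.1 p.1.2))
        (fun p q h => (eD p q h).toRingHom)) :=
  Ring.DirectLimit.lift _ _ _ (toRingInvLim heD hrS) fun _ _ h y => toRingInvLim_rS heD hrS h y

lemma directLimitToRingInvLim_of_apply (heD : eProp k eD) (hrS : rSysProp k rS) {p q : PIdx}
    (h : p ≤ q) (y : ↥(DeltaSub k q.1.1 q.1.2)) :
    ((directLimitToRingInvLim heD hrS
        (Ring.DirectLimit.of (fun p : PIdx => ↥(DeltaSub k p.1.1 p.1.2))
          (fun p q h => ⇑(rS p q h)) q y) :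
      ∀ p : PIdx, ↥(DeltaSub k p.1.1 p.1.2)) p : MatRing k p.1.1 p.1.2) =
      Emap k p.1.1 p.1.2 q.1.1 q.1.2 y := by
  rw [directLimitToRingInvLim, Ring.DirectLimit.lift_of, coe_toRingInvLim_apply]
  exact emap_rS_of_le hrS h _ y

end Construction

/-- there is a unique ring homomorphism `I : k[δ_∞] → k̂[δ_∞]` such that
for all `(M,N) ≥ (m,n)` and `y ∈ k[δ_{M,N}]`, the `(m,n)`-component of `I(r_{(M,N)}(y))`
equals `e_{(M,N,m,n)}(y)`; moreover `I` is injective. -/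
theorem stmt2 (k : Type) [Field k]
    (eD : ∀ p q : PIdx, p ≤ q →
      (↥(DeltaSub k q.1.1 q.1.2) →ₐ[k] ↥(DeltaSub k p.1.1 p.1.2)))
    (heD : eProp k eD)
    (rS : ∀ p q : PIdx, p ≤ q →
      (↥(DeltaSub k p.1.1 p.1.2) →ₐ[k] ↥(DeltaSub k q.1.1 q.1.2)))
    (hrS : rSysProp k rS) :
    (∃! Ih : Ring.DirectLimit (fun p : PIdx => ↥(DeltaSub k p.1.1 p.1.2))
        (fun p q h => ⇑(rS p q h)) →+*
        ↥(ringInvLim (fun p : PIdx => ↥(DeltaSub k p.1.1 p.1.2))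
          (fun p q h => (eD p q h).toRingHom)),
      ∀ (q p : PIdx) (h : p ≤ q) (y : ↥(DeltaSub k q.1.1 q.1.2)),
        ((Ih (Ring.DirectLimit.of (fun p : PIdx => ↥(DeltaSub k p.1.1 p.1.2))
            (fun p q h => ⇑(rS p q h)) q y) : ∀ p : PIdx, ↥(DeltaSub k p.1.1 p.1.2)) p
          : MatRing k p.1.1 p.1.2) =
          Emap k p.1.1 p.1.2 q.1.1 q.1.2 (y : MatRing k q.1.1 q.1.2)) ∧
    (∀ Ih : Ring.DirectLimit (fun p : PIdx => ↥(DeltaSub k p.1.1 p.1.2))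
        (fun p q h => ⇑(rS p q h)) →+*
        ↥(ringInvLim (fun p : PIdx => ↥(DeltaSub k p.1.1 p.1.2))
          (fun p q h => (eD p q h).toRingHom)),
      (∀ (q p : PIdx) (h : p ≤ q) (y : ↥(DeltaSub k q.1.1 q.1.2)),
        ((Ih (Ring.DirectLimit.of (fun p : PIdx => ↥(DeltaSub k p.1.1 p.1.2))
            (fun p q h => ⇑(rS p q h)) q y) : ∀ p : PIdx, ↥(DeltaSub k p.1.1 p.1.2)) p
          : MatRing k p.1.1 p.1.2) =
          Emap k p.1.1 p.1.2 q.1.1 q.1.2 (y : MatRing k q.1.1 q.1.2)) →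
      Function.Injective Ih) := by
  refine ⟨⟨directLimitToRingInvLim heD hrS,
    fun q p h y => directLimitToRingInvLim_of_apply heD hrS h y,
    fun Ih hIh => ringHom_directLimit_ringInvLim_ext fun q p h y => Subtype.ext ?_⟩,
    fun Ih hIh => injective_of_directLimit_of_apply_self Ih fun q y => Subtype.ext ?_⟩
  · rw [hIh q p h y, directLimitToRingInvLim_of_apply heD hrS h y]
  · rw [hIh q q le_rfl y, emap_self]
    rfl

end
end

section
/- Let k be an algebraically closed field whose cardinality is strictly greater than ℵ₀, let ι be a countably infinite type, and let R = MvPolynomial ι k with its standard grading by total degree. For a nonzero function c : ι → k, let 𝔭_c ⊆ R be the ideal generated by the elements c(j)·X_i − c(i)·X_j for all i, j ∈ ι (equivalently, the set of polynomials all of whose homogeneous components vanish at c). Then each 𝔭_c is a homogeneous prime ideal not containing the irrelevant ideal, the corresponding point of the projective spectrum Proj(R) is a closed point, 𝔭_c = 𝔭_{c'} if and only if c' = λ·c for some λ ∈ k^*, and every closed point of Proj(R) is of the form 𝔭_c for some nonzero c : ι → k. Thus the closed points of Proj(R) are in one-to-one correspondence with nonzero functions ι → k modulo scalar multiplication. 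-/
set_option maxHeartbeats 2000000
set_option synthInstance.maxHeartbeats 400000

noncomputable section

open MvPolynomial

attribute [local instance] MvPolynomial.gradedAlgebra

/-- The ideal `𝔭_c` attached to a function `c : ι → k`: the ideal generated by the
elements `c(j)·X_i − c(i)·X_j`. -/
def pIdeal (k : Type) [Field k] (ι : Type) (c : ι → k) : Ideal (MvPolynomial ι k) :=
  Ideal.span {f | ∃ i j : ι, f = C (c j) * X i - C (c i) * X j}

/-!
Restricting `f` to the line through `c`, `X i ↦ c i • T`, gives `∑ₙ fₙ(c) Tⁿ`. For `c ≠ 0` the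
ideal `pIdeal c` is the kernel of this restriction, so it is a homogeneous prime, and it consists
of the polynomials whose homogeneous components vanish at `c`.

It is maximal among relevant homogeneous primes: if `𝔮 ⊇ pIdeal c` contains a homogeneous `h` of
degree `n` with `h(c) ≠ 0` and misses a homogeneous `g` of degree `e > 0`, then
`h(c)ᵉ gⁿ - g(c)ⁿ hᵉ ∈ pIdeal c ⊆ 𝔮` forces `gⁿ ∈ 𝔮`. Conversely, for such `𝔮` and `g` the ideal
`𝔮 + (g - 1)` is proper; a maximal ideal above it has a residue field of countable dimension over
`k`, which is `k` itself since `k` is uncountable and algebraically closed. The resulting point `c`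
has `g(c) = 1`, so `c ≠ 0`, and `𝔮 ⊆ pIdeal c`.
-/

namespace MvPolynomial

section LineEval

variable {σ R S : Type*} [CommSemiring R] [CommSemiring S] [Algebra R S]

def lineEval (v : σ → S) : MvPolynomial σ R →ₐ[R] Polynomial S :=
  aeval fun i => Polynomial.C (v i) * Polynomial.X

lemma lineEval_monomial (v : σ → S) (s : σ →₀ ℕ) (a : R) :
    lineEval v (monomial s a) = Polynomial.monomial s.degree (aeval v (monomial s a)) := by
  rw [lineEval, aeval_monomial, aeval_monomial, Finsupp.prod, Finsupp.prod]
  simp_rw [mul_pow, ← Polynomial.C_pow]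
  rw [Finset.prod_mul_distrib, ← map_prod, Finset.prod_pow_eq_pow_sum,
    Polynomial.algebraMap_apply, ← mul_assoc, ← map_mul, Polynomial.C_mul_X_pow_eq_monomial]
  rfl

lemma coeff_lineEval (v : σ → S) (f : MvPolynomial σ R) (n : ℕ) :
    (lineEval v f).coeff n = aeval v (homogeneousComponent n f) := by
  induction f using induction_on' with
  | add p q hp hq => simp only [map_add, Polynomial.coeff_add, hp, hq]
  | monomial s a =>
    rw [lineEval_monomial, Polynomial.coeff_monomial,
      homogeneousComponent_of_mem (isHomogeneous_monomial a rfl)]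
    obtain rfl | h := eq_or_ne s.degree n
    · simp
    · simp [h, h.symm]

lemma lineEval_of_isHomogeneous (v : σ → S) {f : MvPolynomial σ R} {n : ℕ}
    (hf : f.IsHomogeneous n) : lineEval v f = Polynomial.monomial n (aeval v f) := by
  ext m
  rw [coeff_lineEval, homogeneousComponent_of_mem hf, Polynomial.coeff_monomial]
  obtain rfl | h := eq_or_ne m n
  · simp
  · simp [h, h.symm]

lemma lineEval_eq_zero_iff (v : σ → S) (f : MvPolynomial σ R) :
    lineEval v f = 0 ↔ ∀ n, aeval v (homogeneousComponent n f) = 0 := by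
  rw [Polynomial.ext_iff]
  simp only [coeff_lineEval, Polynomial.coeff_zero]

end LineEval

lemma sup_span_sub_one_ne_top {σ R : Type*} [CommRing R] {P : Ideal (MvPolynomial σ R)}
    (hP : P.IsHomogeneous (homogeneousSubmodule σ R)) [P.IsPrime] {g : MvPolynomial σ R}
    {e : ℕ} (hg : g.IsHomogeneous e) (he : e ≠ 0) (hgP : g ∉ P) :
    P ⊔ Ideal.span {g - 1} ≠ ⊤ := by
  intro htop
  obtain ⟨p, hp, q, hq, hpq⟩ := Submodule.mem_sup.mp (htop ▸ Submodule.mem_top :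
    (1 : MvPolynomial σ R) ∈ P ⊔ Ideal.span {g - 1})
  obtain ⟨a, rfl⟩ := Ideal.mem_span_singleton'.mp hq
  set v : σ → MvPolynomial σ R ⧸ P := fun i => Ideal.Quotient.mk P (X i)
  have hv (f : MvPolynomial σ R) : aeval v f = Ideal.Quotient.mk P f := by
    rw [← Ideal.Quotient.mkₐ_eq_mk R, aeval_unique (Ideal.Quotient.mkₐ R P)]
    rfl
  have hp0 : lineEval v p = 0 := (lineEval_eq_zero_iff v p).2 fun n => by
    rw [hv, Ideal.Quotient.eq_zero_iff_mem]
    exact homogeneousComponent_mem_of_mem hP hp n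
  have hunit : IsUnit (Polynomial.monomial e (Ideal.Quotient.mk P g) - 1) := by
    refine IsUnit.of_mul_eq_one_right (lineEval v a) ?_
    simpa [hp0, lineEval_of_isHomogeneous v hg, hv] using congrArg (lineEval v) hpq
  obtain ⟨r, -, hr⟩ := Polynomial.isUnit_iff.mp hunit
  have := congrArg (Polynomial.coeff · e) hr
  simp only [Polynomial.coeff_C, he, ↓reduceIte, Polynomial.coeff_sub,
    Polynomial.coeff_monomial_same, Polynomial.coeff_one, sub_zero] at this
  exact hgP (Ideal.Quotient.eq_zero_iff_mem.mp this.symm)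

end MvPolynomial

namespace ProjectiveSpectrum

variable {A σ : Type*} [CommRing A] [SetLike σ A] [AddSubmonoidClass σ A] {𝒜 : ℕ → σ}
  [GradedRing 𝒜]

lemma exists_pos_mem_notMem (x : ProjectiveSpectrum 𝒜) :
    ∃ e > 0, ∃ g ∈ 𝒜 e, g ∉ x.asHomogeneousIdeal := by
  have h := x.not_irrelevant_le
  simp only [HomogeneousIdeal.irrelevant_le, not_forall] at h
  obtain ⟨e, he, hle⟩ := h
  obtain ⟨g, hg, hgx⟩ := SetLike.not_le_iff_exists.mp hle
  exact ⟨e, he, g, hg, hgx⟩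

lemma isClosed_singleton_iff (x : ProjectiveSpectrum 𝒜) :
    IsClosed ({x} : Set (ProjectiveSpectrum 𝒜)) ↔ ∀ y, x ≤ y → y = x := by
  simp only [← closure_subset_iff_isClosed, Set.subset_singleton_iff, le_iff_mem_closure]

end ProjectiveSpectrum

lemma IsAlgClosed.algebraMap_surjective_of_rank_le_aleph0 {k K : Type*} [Field k] [IsAlgClosed k]
    [Field K] [Algebra k K] (hk : Cardinal.aleph0 < Cardinal.mk k)
    (hK : Module.rank k K ≤ Cardinal.aleph0) : Function.Surjective (algebraMap k K) := by
  have : Algebra.IsAlgebraic k K := ⟨fun x => by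
    by_contra hx
    have h := (Transcendental.linearIndependent_sub_inv hx).cardinal_lift_le_rank
    exact (h.trans (Cardinal.lift_le_aleph0.mpr hK)).not_gt (Cardinal.aleph0_lt_lift.mpr hk)⟩
  exact IsAlgClosed.algebraMap_bijective_of_isIntegral.2

namespace MvPolynomial

lemma exists_aeval_eq_zero_of_isMaximal {σ k : Type*} [Countable σ] [Field k] [IsAlgClosed k]
    (hk : Cardinal.aleph0 < Cardinal.mk k) (m : Ideal (MvPolynomial σ k)) [m.IsMaximal] :
    ∃ c : σ → k, ∀ f ∈ m, aeval c f = 0 := by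
  let := Ideal.Quotient.field m
  have hrank : Module.rank k (MvPolynomial σ k ⧸ m) ≤ Cardinal.aleph0 :=
    (LinearMap.rank_le_of_surjective (Ideal.Quotient.mkₐ k m).toLinearMap
      Ideal.Quotient.mk_surjective).trans
      (rank_eq_lift.trans_le (Cardinal.lift_le_aleph0.mpr Cardinal.mk_le_aleph0))
  choose c hc using fun i =>
    IsAlgClosed.algebraMap_surjective_of_rank_le_aleph0 hk hrank (Ideal.Quotient.mk m (X i))
  have hmk : (Algebra.ofId k _).comp (aeval c) = Ideal.Quotient.mkₐ k m :=
    algHom_ext fun i => by simpa using hc i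
  refine ⟨c, fun f hf => (algebraMap k (MvPolynomial σ k ⧸ m)).injective ?_⟩
  have := congrArg (· f) hmk
  simpa [Ideal.Quotient.eq_zero_iff_mem.mpr hf] using this

end MvPolynomial

lemma exists_eq_smul_of_mul_eq_mul {ι k : Type*} [Field k] {c c' : ι → k} (hc : c ≠ 0)
    (hc' : c' ≠ 0) (h : ∀ i j, c j * c' i = c i * c' j) : ∃ l : k, l ≠ 0 ∧ c' = l • c := by
  obtain ⟨i₀, h₀⟩ := Function.ne_iff.mp hc
  have hc'_eq : c' = (c' i₀ / c i₀) • c := funext fun j => by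
    rw [Pi.smul_apply, smul_eq_mul, div_mul_eq_mul_div, eq_div_iff h₀]
    linear_combination -h i₀ j
  refine ⟨c' i₀ / c i₀, fun hl => hc' ?_, hc'_eq⟩
  rw [hc'_eq, hl, zero_smul]

section PIdeal

variable {k : Type} [Field k] {ι : Type} {c : ι → k}

lemma sub_mem_pIdeal (c : ι → k) (i j : ι) : C (c j) * X i - C (c i) * X j ∈ pIdeal k ι c :=
  Ideal.subset_span ⟨i, j, rfl⟩

lemma pIdeal_le_ker_lineEval (c : ι → k) : pIdeal k ι c ≤ RingHom.ker (lineEval (R := k) c) := by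
  rw [pIdeal, Ideal.span_le]
  rintro f ⟨i, j, rfl⟩
  simp only [SetLike.mem_coe, RingHom.mem_ker, lineEval, map_sub, map_mul, aeval_C, aeval_X,
    Polynomial.algebraMap_apply, Algebra.algebraMap_self, RingHom.id_apply]
  ring

lemma ker_lineEval_le_pIdeal {i₀ : ι} (h₀ : c i₀ ≠ 0) :
    RingHom.ker (lineEval (R := k) c) ≤ pIdeal k ι c := by
  intro f hf
  set θ : MvPolynomial ι k →ₐ[k] MvPolynomial ι k := aeval fun j => C (c j * (c i₀)⁻¹) * X i₀
  have hθ_mk : (Ideal.Quotient.mkₐ k (pIdeal k ι c)).comp θ = Ideal.Quotient.mkₐ k _ :=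
    algHom_ext fun j => by
      have hinv : C (c i₀)⁻¹ * C (c i₀) = (1 : MvPolynomial ι k) := by
        rw [← C_mul, inv_mul_cancel₀ h₀, C_1]
      have key : C (c j * (c i₀)⁻¹) * X i₀ - X j =
          -C (c i₀)⁻¹ * (C (c i₀) * X j - C (c j) * X i₀) := by
        rw [C_mul]
        linear_combination X j * hinv
      simp only [AlgHom.comp_apply, Ideal.Quotient.mkₐ_eq_mk, θ, aeval_X, Ideal.Quotient.eq, key]
      exact Ideal.mul_mem_left _ _ (sub_mem_pIdeal c j i₀)
  have hθ_lineEval : θ = (Polynomial.aeval (C (c i₀)⁻¹ * X i₀)).comp (lineEval c) :=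
    algHom_ext fun j => by
      simp only [θ, lineEval, AlgHom.comp_apply, aeval_X, map_mul, Polynomial.aeval_C,
        Polynomial.aeval_X, algebraMap_eq]
      ring
  have hθf : θ f = 0 := by
    rw [hθ_lineEval, AlgHom.comp_apply, RingHom.mem_ker.mp hf, map_zero]
  rw [← Ideal.Quotient.eq_zero_iff_mem, ← Ideal.Quotient.mkₐ_eq_mk k, ← hθ_mk,
    AlgHom.comp_apply, hθf, map_zero]

lemma pIdeal_eq_ker_lineEval (hc : c ≠ 0) : pIdeal k ι c = RingHom.ker (lineEval (R := k) c) :=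
  let ⟨_, h₀⟩ := Function.ne_iff.mp hc
  (pIdeal_le_ker_lineEval c).antisymm (ker_lineEval_le_pIdeal h₀)

lemma mem_pIdeal_iff (hc : c ≠ 0) {f : MvPolynomial ι k} :
    f ∈ pIdeal k ι c ↔ ∀ n, aeval c (homogeneousComponent n f) = 0 := by
  rw [pIdeal_eq_ker_lineEval hc, RingHom.mem_ker, lineEval_eq_zero_iff]

lemma mem_pIdeal_iff_of_isHomogeneous (hc : c ≠ 0) {f : MvPolynomial ι k} {n : ℕ}
    (hf : f.IsHomogeneous n) : f ∈ pIdeal k ι c ↔ aeval c f = 0 := by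
  rw [pIdeal_eq_ker_lineEval hc, RingHom.mem_ker, lineEval_of_isHomogeneous c hf,
    Polynomial.monomial_eq_zero_iff]

lemma pIdeal_isPrime (hc : c ≠ 0) : (pIdeal k ι c).IsPrime := by
  rw [pIdeal_eq_ker_lineEval hc]
  exact RingHom.ker_isPrime _

lemma pIdeal_isHomogeneous (c : ι → k) : (pIdeal k ι c).IsHomogeneous (homogeneousSubmodule ι k) :=
  Ideal.homogeneous_span _ _ <| by
    rintro f ⟨i, j, rfl⟩
    exact ⟨1, sub_mem (isHomogeneous_C_mul_X _ _) (isHomogeneous_C_mul_X _ _)⟩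

lemma pIdeal_le_ker_aeval (c : ι → k) : pIdeal k ι c ≤ RingHom.ker (aeval (R := k) c) := by
  rw [pIdeal, Ideal.span_le]
  rintro f ⟨i, j, rfl⟩
  simp only [SetLike.mem_coe, RingHom.mem_ker, map_sub, map_mul, aeval_C, aeval_X,
    Algebra.algebraMap_self, RingHom.id_apply]
  ring

lemma pIdeal_smul_le (c : ι → k) (l : k) : pIdeal k ι (l • c) ≤ pIdeal k ι c := by
  rw [pIdeal, Ideal.span_le]
  rintro f ⟨i, j, rfl⟩
  have hf : C ((l • c) j) * X i - C ((l • c) i) * X j = C l * (C (c j) * X i - C (c i) * X j) := by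
    simp only [Pi.smul_apply, smul_eq_mul, C_mul]
    ring
  rw [SetLike.mem_coe, hf]
  exact Ideal.mul_mem_left _ _ (sub_mem_pIdeal c i j)

lemma pIdeal_smul {l : k} (hl : l ≠ 0) (c : ι → k) : pIdeal k ι (l • c) = pIdeal k ι c := by
  refine (pIdeal_smul_le c l).antisymm ?_
  simpa [smul_smul, inv_mul_cancel₀ hl] using pIdeal_smul_le (l • c) l⁻¹

lemma pIdeal_eq_pIdeal_iff {c c' : ι → k} (hc : c ≠ 0) (hc' : c' ≠ 0) :
    pIdeal k ι c = pIdeal k ι c' ↔ ∃ l : k, l ≠ 0 ∧ c' = l • c := by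
  refine ⟨fun h => exists_eq_smul_of_mul_eq_mul hc hc' fun i j => ?_, ?_⟩
  · have := pIdeal_le_ker_aeval c' (h ▸ sub_mem_pIdeal c i j)
    simpa [sub_eq_zero] using this
  · rintro ⟨l, hl, rfl⟩
    exact (pIdeal_smul hl c).symm

lemma aeval_eq_zero_of_pIdeal_le (hc : c ≠ 0) {P : Ideal (MvPolynomial ι k)} [P.IsPrime]
    (hle : pIdeal k ι c ≤ P) {g : MvPolynomial ι k} {e : ℕ} (hg : g.IsHomogeneous e)
    (he : 0 < e) (hgP : g ∉ P) {h : MvPolynomial ι k} {n : ℕ} (hh : h.IsHomogeneous n)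
    (hhP : h ∈ P) : aeval c h = 0 := by
  by_contra hhc
  set w := C (aeval c h ^ e) * g ^ n - C (aeval c g ^ n) * h ^ e
  have hw : w ∈ P := by
    refine hle ((mem_pIdeal_iff_of_isHomogeneous hc (n := e * n) ?_).2 ?_)
    · refine ((hg.pow n).C_mul _).sub ?_
      rw [mul_comm e n]
      exact (hh.pow e).C_mul _
    · simp only [w, map_sub, map_mul, map_pow, aeval_C, Algebra.algebraMap_self,
        RingHom.id_apply]
      ring
  have hgn : C (aeval c h ^ e) * g ^ n ∈ P := by
    have := add_mem hw (P.mul_mem_left (C (aeval c g ^ n)) (P.pow_mem_of_mem hhP e he))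
    rwa [sub_add_cancel] at this
  have hunit : IsUnit (C (aeval c h ^ e) : MvPolynomial ι k) :=
    (isUnit_iff_ne_zero.mpr (pow_ne_zero e hhc)).map C
  exact hgP (Ideal.IsPrime.mem_of_pow_mem inferInstance n
    ((Ideal.unit_mul_mem_iff_mem P hunit).mp hgn))

def pIdealPoint (c : ι → k) (hc : c ≠ 0) : ProjectiveSpectrum (homogeneousSubmodule ι k) where
  asHomogeneousIdeal := ⟨pIdeal k ι c, pIdeal_isHomogeneous c⟩
  isPrime := pIdeal_isPrime hc
  not_irrelevant_le hle := by
    obtain ⟨i, hi⟩ := Function.ne_iff.mp hc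
    have hX := hle (HomogeneousIdeal.mem_irrelevant_of_mem _ one_pos (isHomogeneous_X k i))
    exact hi (by simpa using (mem_pIdeal_iff_of_isHomogeneous hc (isHomogeneous_X k i)).1 hX)

lemma isClosed_singleton_pIdealPoint (hc : c ≠ 0) :
    IsClosed {pIdealPoint c hc} := by
  rw [ProjectiveSpectrum.isClosed_singleton_iff]
  intro y hy
  obtain ⟨e, he, g, hg, hgy⟩ := y.exists_pos_mem_notMem
  refine le_antisymm (fun f hf => (mem_pIdeal_iff hc).2 fun n => ?_) hy
  exact aeval_eq_zero_of_pIdeal_le hc hy hg he hgy (homogeneousComponent_isHomogeneous n f)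
    (homogeneousComponent_mem_of_mem y.asHomogeneousIdeal.isHomogeneous hf n)

lemma exists_le_pIdealPoint [Countable ι] [IsAlgClosed k] (hk : Cardinal.aleph0 < Cardinal.mk k)
    (x : ProjectiveSpectrum (homogeneousSubmodule ι k)) :
    ∃ (c : ι → k) (hc : c ≠ 0), x ≤ pIdealPoint c hc := by
  obtain ⟨e, he, g, hg, hgx⟩ := x.exists_pos_mem_notMem
  obtain ⟨m, _, hle⟩ := Ideal.exists_le_maximal _
    (sup_span_sub_one_ne_top x.asHomogeneousIdeal.isHomogeneous hg he.ne' hgx)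
  obtain ⟨c, hc⟩ := exists_aeval_eq_zero_of_isMaximal hk m
  have hg1 : aeval c g = 1 := by
    have := hc _ (hle (Ideal.mem_sup_right (Ideal.mem_span_singleton_self _)))
    rwa [map_sub, map_one, sub_eq_zero] at this
  have hc0 : c ≠ 0 := by
    rintro rfl
    have hg0 : constantCoeff g = 0 := hg.coeff_eq_zero (by simpa using he.ne)
    simp [hg0] at hg1
  refine ⟨c, hc0, fun f hf => (mem_pIdeal_iff hc0).2 fun n => hc _ (hle (Ideal.mem_sup_left ?_))⟩
  exact homogeneousComponent_mem_of_mem x.asHomogeneousIdeal.isHomogeneous hf n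

end PIdeal

theorem stmt7_general (k : Type) [Field k] [IsAlgClosed k]
    (hcard : Cardinal.aleph0 < Cardinal.mk k)
    (ι : Type) [Countable ι] :
    (∀ c : ι → k, c ≠ 0 →
      ∃ x : ProjectiveSpectrum (homogeneousSubmodule ι k),
        x.asHomogeneousIdeal.toIdeal = pIdeal k ι c ∧ IsClosed ({x} :
          Set (ProjectiveSpectrum (homogeneousSubmodule ι k)))) ∧
    (∀ c c' : ι → k, c ≠ 0 → c' ≠ 0 →
      (pIdeal k ι c = pIdeal k ι c' ↔ ∃ l : k, l ≠ 0 ∧ c' = l • c)) ∧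
    (∀ x : ProjectiveSpectrum (homogeneousSubmodule ι k),
      IsClosed ({x} : Set (ProjectiveSpectrum (homogeneousSubmodule ι k))) →
      ∃ c : ι → k, c ≠ 0 ∧ x.asHomogeneousIdeal.toIdeal = pIdeal k ι c) := by
  refine ⟨fun c hc => ⟨pIdealPoint c hc, rfl, isClosed_singleton_pIdealPoint hc⟩,
    fun c c' hc hc' => pIdeal_eq_pIdeal_iff hc hc', fun x hx => ?_⟩
  obtain ⟨c, hc, hle⟩ := exists_le_pIdealPoint hcard x
  have hx_eq : pIdealPoint c hc = x := (ProjectiveSpectrum.isClosed_singleton_iff x).1 hx _ hle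
  exact ⟨c, hc, by rw [← hx_eq]; rfl⟩

/-- let `k` be algebraically closed with `|k| > ℵ₀` and `ι` countably
infinite.  For each nonzero `c : ι → k`, the ideal `𝔭_c` is a homogeneous prime not
containing the irrelevant ideal, giving a closed point of `Proj (k[X_i : i ∈ ι])`;
`𝔭_c = 𝔭_{c'}` iff `c' = λ • c` for some `λ ∈ kˣ`; and every closed point of `Proj`
arises this way.  Thus the closed points of `Proj` correspond to nonzero functions
`ι → k` modulo scalars. -/
theorem stmt7 (k : Type) [Field k] [IsAlgClosed k]
    (hcard : Cardinal.aleph0 < Cardinal.mk k)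
    (ι : Type) [Countable ι] [Infinite ι] :
    (∀ c : ι → k, c ≠ 0 →
      ∃ x : ProjectiveSpectrum (homogeneousSubmodule ι k),
        x.asHomogeneousIdeal.toIdeal = pIdeal k ι c ∧ IsClosed ({x} :
          Set (ProjectiveSpectrum (homogeneousSubmodule ι k)))) ∧
    (∀ c c' : ι → k, c ≠ 0 → c' ≠ 0 →
      (pIdeal k ι c = pIdeal k ι c' ↔ ∃ l : k, l ≠ 0 ∧ c' = l • c)) ∧
    (∀ x : ProjectiveSpectrum (homogeneousSubmodule ι k),
      IsClosed ({x} : Set (ProjectiveSpectrum (homogeneousSubmodule ι k))) →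
      ∃ c : ι → k, c ≠ 0 ∧ x.asHomogeneousIdeal.toIdeal = pIdeal k ι c) :=
  stmt7_general k hcard ι
end
end

section
/- Let L be the inverse limit of the rings k[SL_{m,n}] ⊗_k k[δ_{m,n}] along the maps φ_{(m',n',m,n)} ⊗ e_{(m',n',m,n)}, realized as the subring of compatible families in ∏_{(m,n)} (k[SL_{m,n}] ⊗_k k[δ_{m,n}]). Then there is a unique ring homomorphism λ̂ : k̂[δ_∞] → L such that for every x = (x_{(m,n)}) ∈ k̂[δ_∞] and every (m,n), the (m,n)-component of λ̂(x) equals λ_{(m,n)}(x_{(m,n)}). (In particular the family (λ_{(m,n)}(x_{(m,n)}))_{(m,n)} is compatible, so that k̂[δ_∞] carries a coaction of k[SL_∞].) -/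
open MvPolynomial TensorProduct

set_option maxHeartbeats 2000000
set_option synthInstance.maxHeartbeats 400000

noncomputable section

open MvPolynomial TensorProduct

/-- Row/column indices of the generic `N × N` matrix, `N = m+n`:
the integers `-m, ..., n-1`. -/
abbrev SqIdx (m n : ℕ) : Type := ↥(Finset.Icc (-(m : ℤ)) ((n : ℤ) - 1))

/-- The determinant of the generic `N × N` matrix `(g_{i,j})`. -/
def genDet (k : Type) [Field k] (m n : ℕ) : MvPolynomial (SqIdx m n × SqIdx m n) k :=
  Matrix.det (Matrix.of fun i j : SqIdx m n => (X (i, j) : MvPolynomial (SqIdx m n × SqIdx m n) k))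

/-- `k[SL_{m,n}]`: the quotient of the polynomial ring in the `g_{i,j}` by `(det(g) - 1)`. -/
abbrev SLring (k : Type) [Field k] (m n : ℕ) : Type :=
  MvPolynomial (SqIdx m n × SqIdx m n) k ⧸ Ideal.span {genDet k m n - 1}

/-- The image of the generator `g_{i,j}` in `k[SL_{m,n}]`. -/
def gvar (k : Type) [Field k] (m n : ℕ) (i j : SqIdx m n) : SLring k m n :=
  Ideal.Quotient.mk _ (X (i, j))

/-- The coaction `Λ_{(m,n)} : k[a]_{m,n} → k[SL_{m,n}] ⊗ k[a]_{m,n}`,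
`a_{i,j} ↦ Σ_l g_{i,l} ⊗ a_{l,j}`. -/
def coactA (k : Type) [Field k] (m n : ℕ) :
    MatRing k m n →ₐ[k] SLring k m n ⊗[k] MatRing k m n :=
  aeval fun p : RowI m n × ColI m =>
    ∑ l : SqIdx m n, gvar k m n p.1 l ⊗ₜ[k] (X (l, p.2) : MatRing k m n)

/-- The defining property of the system of transition maps
`φ_{(m',n',m,n)} : k[SL_{m',n'}] → k[SL_{m,n}]` on the generators. -/
def phiSysProp (k : Type) [Field k]
    (φ : ∀ p q : PIdx, p ≤ q → (SLring k q.1.1 q.1.2 →ₐ[k] SLring k p.1.1 p.1.2)) : Prop :=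
  ∀ (p q : PIdx) (h : p ≤ q) (i j : SqIdx q.1.1 q.1.2),
    φ p q h (gvar k q.1.1 q.1.2 i j) =
      if h2 : (i.1 ∈ Finset.Icc (-(p.1.1 : ℤ)) ((p.1.2 : ℤ) - 1)) ∧
          (j.1 ∈ Finset.Icc (-(p.1.1 : ℤ)) ((p.1.2 : ℤ) - 1)) then
        gvar k p.1.1 p.1.2 ⟨i.1, h2.1⟩ ⟨j.1, h2.2⟩
      else if i.1 = j.1 then 1 else 0

/-!
The coactions `Λ_{(m,n)} : a ↦ g a` on `k[a]_{m,n}` are intertwined by the substitution maps: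
`(φ ⊗ E) ∘ Λ_{(m',n')} = Λ_{(m,n)} ∘ E`. On generators this is the block-matrix identity
`diag(1, g, 1) · [[1, 0], [0, a], [0, 0]] = [[1, 0], [0, g a], [0, 0]]`. Over a field, tensoring
with `k[SL]` preserves the injectivity of `k[δ_{m,n}] ⊆ k[a]_{m,n}`, so the identity descends to
`(φ ⊗ e) ∘ λ_{(m',n')} = λ_{(m,n)} ∘ e`. Hence applying `λ` componentwise sends compatible families
to compatible families, and a map into an inverse limit is determined by its components.
-/
namespace ringInvLim

variable {ι : Type*} [Preorder ι] {G H : ι → Type*} [∀ i, Ring (G i)] [∀ i, Ring (H i)]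
  {f : ∀ i j : ι, i ≤ j → (G j →+* G i)} {g : ∀ i j : ι, i ≤ j → (H j →+* H i)}

def map (ψ : ∀ i, G i →+* H i)
    (hψ : ∀ i j (h : i ≤ j) x, g i j h (ψ j x) = ψ i (f i j h x)) :
    ringInvLim G f →+* ringInvLim H g :=
  RingHom.codRestrict
    ((RingHom.pi fun i => (ψ i).comp (Pi.evalRingHom G i)).comp (ringInvLim G f).subtype) _
    fun x i j h => by simp [hψ, x.2 i j h]

theorem existsUnique_map (ψ : ∀ i, G i →+* H i)
    (hψ : ∀ i j (h : i ≤ j) x, g i j h (ψ j x) = ψ i (f i j h x)) :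
    ∃! Ψ : ringInvLim G f →+* ringInvLim H g, ∀ x i, (Ψ x).1 i = ψ i (x.1 i) :=
  ⟨map ψ hψ, fun _ _ => rfl, fun _ hΨ => RingHom.ext fun x => Subtype.ext <| funext (hΨ x)⟩

end ringInvLim

theorem Subalgebra.lTensor_val_injective {k A B : Type*} [Field k] [Ring A] [Algebra k A]
    [Ring B] [Algebra k B] (S : Subalgebra k B) :
    Function.Injective (Algebra.TensorProduct.map (AlgHom.id k A) S.val) :=
  Module.Flat.lTensor_preserves_injective_linearMap S.val.toLinearMap Subtype.val_injective

theorem Algebra.TensorProduct.map_restrict_apply_of_comp_eq {k A A' B B' : Type*} [Field k]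
    [Ring A] [Algebra k A] [Ring A'] [Algebra k A']
    [Ring B] [Algebra k B] [Ring B'] [Algebra k B']
    {S : Subalgebra k B} {S' : Subalgebra k B'}
    (φ : A →ₐ[k] A') (E : B →ₐ[k] B') (e : S →ₐ[k] S') (he : ∀ y, (e y : B') = E (y : B))
    (Λ : B →ₐ[k] A ⊗[k] B) (Λ' : B' →ₐ[k] A' ⊗[k] B')
    (hΛ : (Algebra.TensorProduct.map φ E).comp Λ = Λ'.comp E)
    (lam : S →ₐ[k] A ⊗[k] S) (lam' : S' →ₐ[k] A' ⊗[k] S')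
    (hlam : ∀ y, Algebra.TensorProduct.map (AlgHom.id k A) S.val (lam y) = Λ (y : B))
    (hlam' : ∀ y, Algebra.TensorProduct.map (AlgHom.id k A') S'.val (lam' y) = Λ' (y : B'))
    (y : S) :
    Algebra.TensorProduct.map φ e (lam y) = lam' (e y) := by
  apply S'.lTensor_val_injective
  have hval : (Algebra.TensorProduct.map (AlgHom.id k A') S'.val).comp
      (Algebra.TensorProduct.map φ e) =
      (Algebra.TensorProduct.map φ E).comp (Algebra.TensorProduct.map (AlgHom.id k A) S.val) := by
    rw [← Algebra.TensorProduct.map_comp, ← Algebra.TensorProduct.map_comp]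
    congr 1
    exact AlgHom.ext he
  calc _ = Algebra.TensorProduct.map φ E
        (Algebra.TensorProduct.map (AlgHom.id k A) S.val (lam y)) := DFunLike.congr_fun hval (lam y)
    _ = Λ' (E y) := by rw [hlam]; exact DFunLike.congr_fun hΛ (y : B)
    _ = _ := by rw [hlam', he]

/-- The entries, indexed by all of `ℤ`, of the block matrices `diag(1, g, 1)` and
`[[1, 0], [0, a], [0, 0]]`: the images of `g_{i,j}` under `φ` and of `a_{i,j}` under `E`. -/
def gvarExt (k : Type) [Field k] (m n : ℕ) (i j : ℤ) : SLring k m n :=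
  if h : i ∈ Finset.Icc (-(m : ℤ)) ((n : ℤ) - 1) ∧ j ∈ Finset.Icc (-(m : ℤ)) ((n : ℤ) - 1) then
    gvar k m n ⟨i, h.1⟩ ⟨j, h.2⟩
  else if i = j then 1 else 0

def avarExt (k : Type) [Field k] (m n : ℕ) (i j : ℤ) : MatRing k m n :=
  if h : i ∈ Finset.Icc (-(m : ℤ)) ((n : ℤ) - 1) ∧ j ∈ Finset.Icc (-(m : ℤ)) (-1 : ℤ) then
    X (⟨i, h.1⟩, ⟨j, h.2⟩)
  else if i = j then 1 else 0

theorem Emap_X (k : Type) [Field k] (m n m' n' : ℕ) (p : RowI m' n' × ColI m') :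
    Emap k m n m' n' (X p) = avarExt k m n p.1.1 p.2.1 :=
  aeval_X _ _

theorem coactA_X (k : Type) [Field k] (m n : ℕ) (p : RowI m n × ColI m) :
    coactA k m n (X p) = ∑ l : SqIdx m n, gvar k m n p.1 l ⊗ₜ[k] (X (l, p.2) : MatRing k m n) :=
  aeval_X _ _

theorem sum_gvarExt_tmul_avarExt (k : Type) [Field k] (m n : ℕ) {t : Finset ℤ}
    (ht : Finset.Icc (-(m : ℤ)) ((n : ℤ) - 1) ⊆ t) {i j : ℤ} (hjt : j ∈ t) (hj : j ≤ -1) :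
    ∑ l ∈ t, gvarExt k m n i l ⊗ₜ[k] avarExt k m n l j = coactA k m n (avarExt k m n i j) := by
  by_cases hjm : -(m : ℤ) ≤ j
  · have hjc : j ∈ Finset.Icc (-(m : ℤ)) (-1 : ℤ) := Finset.mem_Icc.2 ⟨hjm, hj⟩
    have hjr : j ∈ Finset.Icc (-(m : ℤ)) ((n : ℤ) - 1) := Finset.mem_Icc.2 ⟨hjm, by omega⟩
    rw [← Finset.sum_subset ht fun l _ hl => by
      simp [avarExt, hl, show l ≠ j by rintro rfl; exact hl hjr]]
    by_cases hi : i ∈ Finset.Icc (-(m : ℤ)) ((n : ℤ) - 1)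
    · rw [avarExt, dif_pos ⟨hi, hjc⟩, coactA_X, ← Finset.sum_coe_sort]
      refine Finset.sum_congr rfl fun l _ => ?_
      simp [gvarExt, avarExt, hi, l.2, hjc]
    · rw [avarExt, dif_neg fun h => hi h.1, if_neg (by rintro rfl; exact hi hjr), map_zero]
      refine Finset.sum_eq_zero fun l hl => ?_
      simp [gvarExt, hi, show i ≠ l by rintro rfl; exact hi hl]
  · have hjc : j ∉ Finset.Icc (-(m : ℤ)) (-1 : ℤ) := fun h => hjm (Finset.mem_Icc.1 h).1
    have hjr : j ∉ Finset.Icc (-(m : ℤ)) ((n : ℤ) - 1) := fun h => hjm (Finset.mem_Icc.1 h).1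
    simp only [avarExt, hjc, and_false, dite_false]
    rw [Finset.sum_eq_single_of_mem j hjt fun l _ hl => by simp [hl], if_pos rfl]
    simp only [gvarExt, hjr, and_false, dite_false]
    split_ifs
    · exact Algebra.TensorProduct.one_def.symm.trans (coactA k m n).toRingHom.map_one.symm
    · rw [map_zero, TensorProduct.zero_tmul]

theorem tensorMap_comp_coactA (k : Type) [Field k] {m n m' n' : ℕ} (hm : m ≤ m') (hn : n ≤ n')
    (φ : SLring k m' n' →ₐ[k] SLring k m n)
    (hφ : ∀ i j : SqIdx m' n', φ (gvar k m' n' i j) = gvarExt k m n i j) :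
    (Algebra.TensorProduct.map φ (Emap k m n m' n')).comp (coactA k m' n') =
      (coactA k m n).comp (Emap k m n m' n') := by
  refine MvPolynomial.algHom_ext fun ⟨i, j⟩ => ?_
  simp only [AlgHom.comp_apply, coactA_X, Emap_X, map_sum, Algebra.TensorProduct.map_tmul, hφ]
  rw [Finset.sum_coe_sort (f := fun l => gvarExt k m n i l ⊗ₜ[k] avarExt k m n l j)]
  refine sum_gvarExt_tmul_avarExt k m n (fun l hl => ?_) ?_ (Finset.mem_Icc.1 j.2).2
  · simp only [Finset.mem_Icc] at hl ⊢; omega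
  · have := j.2; simp only [Finset.mem_Icc] at this ⊢; omega

/-- there is a unique ring homomorphism
`λ̂ : k̂[δ_∞] → L = lim (k[SL_{m,n}] ⊗ k[δ_{m,n}])` whose `(m,n)`-component is
`λ_{(m,n)}` applied to the `(m,n)`-component; in particular `k̂[δ_∞]` carries a
coaction of `k[SL_∞]`. -/
theorem stmt11 (k : Type) [Field k]
    (eD : ∀ p q : PIdx, p ≤ q →
      (↥(DeltaSub k q.1.1 q.1.2) →ₐ[k] ↥(DeltaSub k p.1.1 p.1.2)))
    (heD : eProp k eD)
    (φ : ∀ p q : PIdx, p ≤ q → (SLring k q.1.1 q.1.2 →ₐ[k] SLring k p.1.1 p.1.2))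
    (hφ : phiSysProp k φ)
    -- the restricted coactions `λ_{(m,n)} : k[δ_{m,n}] → k[SL_{m,n}] ⊗ k[δ_{m,n}]`
    (lam : ∀ p : PIdx,
      ↥(DeltaSub k p.1.1 p.1.2) →ₐ[k] SLring k p.1.1 p.1.2 ⊗[k] ↥(DeltaSub k p.1.1 p.1.2))
    (hlam : ∀ (p : PIdx) (x : ↥(DeltaSub k p.1.1 p.1.2)),
      Algebra.TensorProduct.map (AlgHom.id k (SLring k p.1.1 p.1.2))
          (DeltaSub k p.1.1 p.1.2).val (lam p x) =
        coactA k p.1.1 p.1.2 (x : MatRing k p.1.1 p.1.2)) :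
    ∃! lamHat : ↥(ringInvLim (fun p : PIdx => ↥(DeltaSub k p.1.1 p.1.2))
        (fun p q h => (eD p q h).toRingHom)) →+*
        ↥(ringInvLim (fun p : PIdx => SLring k p.1.1 p.1.2 ⊗[k] ↥(DeltaSub k p.1.1 p.1.2))
          (fun p q h => (Algebra.TensorProduct.map (φ p q h) (eD p q h)).toRingHom)),
      ∀ x (p : PIdx), (lamHat x).1 p = lam p (x.1 p) := by
  refine ringInvLim.existsUnique_map (G := fun p : PIdx => ↥(DeltaSub k p.1.1 p.1.2))
    (H := fun p => SLring k p.1.1 p.1.2 ⊗[k] ↥(DeltaSub k p.1.1 p.1.2))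
    (fun p => (lam p).toRingHom) fun p q h y => ?_
  have hcoact := tensorMap_comp_coactA k h.1 h.2 (φ p q h) (hφ p q h)
  exact Algebra.TensorProduct.map_restrict_apply_of_comp_eq (φ p q h) _ (eD p q h) (heD p q h)
    _ _ hcoact (lam q) (lam p) (hlam q) (hlam p) y

end
end

section
/- Let m' ≥ m and n' ≥ n be positive integers. There exists a (necessarily unique) k_q-algebra homomorphism E^q_{(m',n',m,n)} : k_q[a]_{m',n'} → k_q[a]_{m,n} such that E^q(a_{i,j}) = a_{i,j} if -m ≤ i ≤ n-1 and -m ≤ j ≤ -1, E^q(a_{i,j}) = 1 if -m' ≤ i = j ≤ -m-1, and E^q(a_{i,j}) = 0 otherwise; i.e., these prescribed values satisfy the defining relations of the quantum matrix algebra. -/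
set_option maxHeartbeats 2000000
set_option synthInstance.maxHeartbeats 400000

noncomputable section

open TensorProduct

/-- `k_q = k[q, q⁻¹]`, the ring of Laurent polynomials over `k`. -/
abbrev kq (k : Type) [Field k] : Type := LaurentPolynomial k

/-- The parameter `q ∈ k_q`. -/
def qParam (k : Type) [Field k] : kq k := LaurentPolynomial.T 1

/-- The inverse parameter `q⁻¹ ∈ k_q`. -/
def qInv (k : Type) [Field k] : kq k := LaurentPolynomial.T (-1)

/-- The defining relations of a quantum matrix algebra, with rows indexed by `R` and
columns indexed by `C`. -/
inductive QMRel (k : Type) [Field k] (R C : Type) [LinearOrder R] [LinearOrder C] :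
    FreeAlgebra (kq k) (R × C) → FreeAlgebra (kq k) (R × C) → Prop
  | col (i i' : R) (j : C) (h : i < i') :
      QMRel k R C (FreeAlgebra.ι (kq k) (i, j) * FreeAlgebra.ι (kq k) (i', j))
        (qInv k • (FreeAlgebra.ι (kq k) (i', j) * FreeAlgebra.ι (kq k) (i, j)))
  | row (i : R) (j j' : C) (h : j < j') :
      QMRel k R C (FreeAlgebra.ι (kq k) (i, j) * FreeAlgebra.ι (kq k) (i, j'))
        (qInv k • (FreeAlgebra.ι (kq k) (i, j') * FreeAlgebra.ι (kq k) (i, j)))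
  | comm (i i' : R) (j j' : C) (h1 : i < i') (h2 : j' < j) :
      QMRel k R C (FreeAlgebra.ι (kq k) (i, j) * FreeAlgebra.ι (kq k) (i', j'))
        (FreeAlgebra.ι (kq k) (i', j') * FreeAlgebra.ι (kq k) (i, j))
  | qcomm (i i' : R) (j j' : C) (h1 : i < i') (h2 : j < j') :
      QMRel k R C
        (FreeAlgebra.ι (kq k) (i, j) * FreeAlgebra.ι (kq k) (i', j') -
          FreeAlgebra.ι (kq k) (i', j') * FreeAlgebra.ι (kq k) (i, j))
        ((qInv k - qParam k) • (FreeAlgebra.ι (kq k) (i', j) * FreeAlgebra.ι (kq k) (i, j')))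

/-- The quantum matrix algebra with rows indexed by `R` and columns indexed by `C`. -/
abbrev QMatG (k : Type) [Field k] (R C : Type) [LinearOrder R] [LinearOrder C] : Type :=
  RingQuot (QMRel k R C)

/-- The generator `a_{r,c}` of the quantum matrix algebra. -/
def qgen (k : Type) [Field k] (R C : Type) [LinearOrder R] [LinearOrder C] (r : R) (c : C) :
    QMatG k R C :=
  RingQuot.mkAlgHom (kq k) (QMRel k R C) (FreeAlgebra.ι (kq k) (r, c))

/-- The rectangular quantum matrix algebra `k_q[a]_{m,n}`. -/
abbrev QMat (k : Type) [Field k] (m n : ℕ) : Type := QMatG k (RowI m n) (ColI m)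

/-- The generator `a_{i,j}` of `k_q[a]_{m,n}`. -/
def av (k : Type) [Field k] (m n : ℕ) (i : RowI m n) (j : ColI m) : QMat k m n :=
  qgen k (RowI m n) (ColI m) i j

/-- The number of inversions of a map between finite linearly ordered sets. -/
def inversions {a b : ℕ} (f : Fin a → Fin b) : ℕ :=
  ((Finset.univ : Finset (Fin a × Fin a)).filter fun p => p.1 < p.2 ∧ f p.2 < f p.1).card

/-- The coefficient `(-q)^{-ℓ}`. -/
def qCoeff (k : Type) [Field k] (l : ℕ) : kq k :=
  (-1 : kq k) ^ l * LaurentPolynomial.T (-(l : ℤ))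

/-- The general quantum minor on rows `row 0 < row 1 < ⋯` and columns
`col 0 < col 1 < ⋯`:
`Σ_σ (-q)^{-ℓ(σ)} a_{row 0, col (σ 0)} ⋯ a_{row (s-1), col (σ (s-1))}`. -/
def qMinorG (k : Type) [Field k] (R C : Type) [LinearOrder R] [LinearOrder C]
    (s : ℕ) (row : Fin s → R) (col : Fin s → C) : QMatG k R C :=
  ∑ σ : Equiv.Perm (Fin s),
    qCoeff k (inversions ⇑σ) •
      (List.ofFn fun t : Fin s => qgen k R C (row t) (col (σ t))).prod

/-- The quantum minor `D_{i_0 … i_{m-1}}` of `k_q[a]_{m,n}` on the rows in `I`. -/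
def qMinor (k : Type) [Field k] (m n : ℕ) (I : Finset ℤ) (hI : I.card = m)
    (hsub : I ⊆ Finset.Icc (-(m : ℤ)) ((n : ℤ) - 1)) : QMat k m n :=
  qMinorG k (RowI m n) (ColI m) m
    (fun s => ⟨I.orderEmbOfFin hI s, hsub (Finset.orderEmbOfFin_mem I hI s)⟩)
    (fun t => ⟨-(m : ℤ) + (t : ℕ), by
      have := t.2
      simp only [Finset.mem_Icc]
      omega⟩)

/-- The quantum grassmannian `k_q[Δ_{m,n}]`: the subalgebra of `k_q[a]_{m,n}` generated
by the quantum minors. -/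
def QDeltaSub (k : Type) [Field k] (m n : ℕ) : Subalgebra (kq k) (QMat k m n) :=
  Algebra.adjoin (kq k) {x | ∃ I hI hsub, x = qMinor k m n I hI hsub}

namespace Stmt12Aux

variable {k : Type} [Field k] {R C : Type} [LinearOrder R] [LinearOrder C]

lemma qg_col (i i' : R) (j : C) (h : i < i') :
    qgen k R C i j * qgen k R C i' j = qInv k • (qgen k R C i' j * qgen k R C i j) := by
  have := RingQuot.mkAlgHom_rel (kq k) (QMRel.col (k := k) i i' j h)
  simpa only [qgen, map_mul, map_smul] using this

lemma qg_row (i : R) (j j' : C) (h : j < j') :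
    qgen k R C i j * qgen k R C i j' = qInv k • (qgen k R C i j' * qgen k R C i j) := by
  have := RingQuot.mkAlgHom_rel (kq k) (QMRel.row (k := k) i j j' h)
  simpa only [qgen, map_mul, map_smul] using this

lemma qg_comm (i i' : R) (j j' : C) (h1 : i < i') (h2 : j' < j) :
    qgen k R C i j * qgen k R C i' j' = qgen k R C i' j' * qgen k R C i j := by
  have := RingQuot.mkAlgHom_rel (kq k) (QMRel.comm (k := k) i i' j j' h1 h2)
  simpa only [qgen, map_mul] using this

lemma qg_qcomm (i i' : R) (j j' : C) (h1 : i < i') (h2 : j < j') :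
    qgen k R C i j * qgen k R C i' j' - qgen k R C i' j' * qgen k R C i j =
      (qInv k - qParam k) • (qgen k R C i' j * qgen k R C i j') := by
  have := RingQuot.mkAlgHom_rel (kq k) (QMRel.qcomm (k := k) i i' j j' h1 h2)
  simpa only [qgen, map_mul, map_smul, map_sub] using this

/-- The prescribed images of the generators. -/
def Fv (k : Type) [Field k] (m n m' n' : ℕ) (p : RowI m' n' × ColI m') : QMat k m n :=
  if h : (p.1.1 ∈ Finset.Icc (-(m : ℤ)) ((n : ℤ) - 1)) ∧
      (p.2.1 ∈ Finset.Icc (-(m : ℤ)) (-1 : ℤ)) then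
    av k m n ⟨p.1.1, h.1⟩ ⟨p.2.1, h.2⟩
  else if p.1.1 = p.2.1 then 1 else 0

variable {m n m' n' : ℕ}

lemma comm_of {a b : QMat k m n} (h : a = 0 ∨ a = 1 ∨ b = 0 ∨ b = 1) :
    a * b = b * a := by
  rcases h with h | h | h | h <;> subst h <;> simp

/-- The in-range condition, numerically. -/
def InR (m n : ℕ) (i j : ℤ) : Prop :=
  (-(m : ℤ) ≤ i ∧ i ≤ (n : ℤ) - 1) ∧ (-(m : ℤ) ≤ j ∧ j ≤ -1)

lemma Fv_av (i : RowI m' n') (j : ColI m') (h : InR m n i.1 j.1) :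
    Fv k m n m' n' (i, j) =
      av k m n ⟨i.1, Finset.mem_Icc.mpr h.1⟩ ⟨j.1, Finset.mem_Icc.mpr h.2⟩ :=
  dif_pos ⟨Finset.mem_Icc.mpr h.1, Finset.mem_Icc.mpr h.2⟩

lemma Fv_one (i : RowI m' n') (j : ColI m') (h : ¬ InR m n i.1 j.1) (he : i.1 = j.1) :
    Fv k m n m' n' (i, j) = 1 := by
  rw [Fv, dif_neg (by simpa only [InR, Finset.mem_Icc] using h), if_pos he]

lemma Fv_zero (i : RowI m' n') (j : ColI m') (h : ¬ InR m n i.1 j.1) (he : i.1 ≠ j.1) :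
    Fv k m n m' n' (i, j) = 0 := by
  rw [Fv, dif_neg (by simpa only [InR, Finset.mem_Icc] using h), if_neg he]

lemma Fv_zero_or_one (i : RowI m' n') (j : ColI m') (h : ¬ InR m n i.1 j.1) :
    Fv k m n m' n' (i, j) = 0 ∨ Fv k m n m' n' (i, j) = 1 := by
  by_cases he : i.1 = j.1
  · exact Or.inr (Fv_one i j h he)
  · exact Or.inl (Fv_zero i j h he)

lemma key (k : Type) [Field k] (m n m' n' : ℕ) (hm : 0 < m) (hn : 0 < n)
    (hmm : m ≤ m') (hnn : n ≤ n') :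
    ∀ ⦃x y⦄, QMRel k (RowI m' n') (ColI m') x y →
      FreeAlgebra.lift (kq k) (Fv k m n m' n') x =
        FreeAlgebra.lift (kq k) (Fv k m n m' n') y := by
  have hn1 : (1 : ℤ) ≤ (n : ℤ) := by exact_mod_cast hn
  have hm1 : (1 : ℤ) ≤ (m : ℤ) := by exact_mod_cast hm
  intro x y h
  induction h with
  | col i i' j h =>
    simp only [map_mul, map_smul, FreeAlgebra.lift_ι_apply]
    have hi := Finset.mem_Icc.mp i.2
    have hi' := Finset.mem_Icc.mp i'.2
    have hj := Finset.mem_Icc.mp j.2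
    have hlt : (i : ℤ) < i' := Subtype.coe_lt_coe.mpr h
    by_cases hP : InR m n i.1 j.1
    · by_cases hQ : InR m n i'.1 j.1
      · rw [Fv_av i j hP, Fv_av i' j hQ]
        exact qg_col _ _ _ (Subtype.mk_lt_mk.mpr hlt)
      · rw [Fv_zero i' j hQ (by simp only [InR] at hP hQ; omega)]
        simp
    · by_cases he : (i : ℤ) = j
      · rw [Fv_zero i' j (by simp only [InR] at hP ⊢; omega) (by omega)]
        simp
      · rw [Fv_zero i j hP he]
        simp
  | row i j j' h =>
    simp only [map_mul, map_smul, FreeAlgebra.lift_ι_apply]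
    have hi := Finset.mem_Icc.mp i.2
    have hj := Finset.mem_Icc.mp j.2
    have hj' := Finset.mem_Icc.mp j'.2
    have hlt : (j : ℤ) < j' := Subtype.coe_lt_coe.mpr h
    by_cases hP : InR m n i.1 j.1
    · by_cases hQ : InR m n i.1 j'.1
      · rw [Fv_av i j hP, Fv_av i j' hQ]
        exact qg_row _ _ _ (Subtype.mk_lt_mk.mpr hlt)
      · exact absurd (by simp only [InR] at hP ⊢; omega) hQ
    · by_cases he : (i : ℤ) = j
      · rw [Fv_zero i j' (by simp only [InR] at hP ⊢; omega) (by omega)]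
        simp
      · rw [Fv_zero i j hP he]
        simp
  | comm i i' j j' h1 h2 =>
    simp only [map_mul, FreeAlgebra.lift_ι_apply]
    by_cases hP : InR m n i.1 j.1
    · by_cases hQ : InR m n i'.1 j'.1
      · rw [Fv_av i j hP, Fv_av i' j' hQ]
        exact qg_comm _ _ _ _ (Subtype.mk_lt_mk.mpr (Subtype.coe_lt_coe.mpr h1))
          (Subtype.mk_lt_mk.mpr (Subtype.coe_lt_coe.mpr h2))
      · exact comm_of (Or.inr (Or.inr (Fv_zero_or_one i' j' hQ)))
    · exact comm_of ((Fv_zero_or_one i j hP).imp id Or.inl)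
  | qcomm i i' j j' h1 h2 =>
    simp only [map_sub, map_mul, map_smul, FreeAlgebra.lift_ι_apply]
    have hi := Finset.mem_Icc.mp i.2
    have hi' := Finset.mem_Icc.mp i'.2
    have hj := Finset.mem_Icc.mp j.2
    have hj' := Finset.mem_Icc.mp j'.2
    have hlt1 : (i : ℤ) < i' := Subtype.coe_lt_coe.mpr h1
    have hlt2 : (j : ℤ) < j' := Subtype.coe_lt_coe.mpr h2
    by_cases hP : InR m n i.1 j.1
    · by_cases hQ : InR m n i'.1 j'.1
      · rw [Fv_av i j hP, Fv_av i' j' hQ, Fv_av i' j ⟨hQ.1, hP.2⟩, Fv_av i j' ⟨hP.1, hQ.2⟩]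
        exact qg_qcomm _ _ _ _ (Subtype.mk_lt_mk.mpr hlt1) (Subtype.mk_lt_mk.mpr hlt2)
      · have hc : Fv k m n m' n' (i, j) * Fv k m n m' n' (i', j') =
            Fv k m n m' n' (i', j') * Fv k m n m' n' (i, j) :=
          comm_of (Or.inr (Or.inr (Fv_zero_or_one i' j' hQ)))
        rw [hc, sub_self]
        have hz : Fv k m n m' n' (i', j) = 0 ∨ Fv k m n m' n' (i, j') = 0 := by
          by_cases hir : -(m : ℤ) ≤ (i' : ℤ) ∧ (i' : ℤ) ≤ (n : ℤ) - 1
          · exact absurd (by simp only [InR] at hP ⊢; omega) hQ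
          · exact Or.inl (Fv_zero i' j (by simp only [InR]; omega)
              (by simp only [InR] at hP; omega))
        rcases hz with hz | hz <;> rw [hz] <;> simp
    · have hc : Fv k m n m' n' (i, j) * Fv k m n m' n' (i', j') =
          Fv k m n m' n' (i', j') * Fv k m n m' n' (i, j) :=
        comm_of ((Fv_zero_or_one i j hP).imp id Or.inl)
      rw [hc, sub_self]
      have hz : Fv k m n m' n' (i', j) = 0 ∨ Fv k m n m' n' (i, j') = 0 := by
        by_cases hjc : -(m : ℤ) ≤ (j : ℤ)
        · refine Or.inr (Fv_zero i j' (by simp only [InR] at hP ⊢; omega)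
            (by simp only [InR] at hP; omega))
        · by_cases he : (i' : ℤ) = j
          · refine Or.inr (Fv_zero i j' (by simp only [InR]; omega) (by omega))
          · exact Or.inl (Fv_zero i' j (by simp only [InR]; omega) he)
      rcases hz with hz | hz <;> rw [hz] <;> simp

end Stmt12Aux

open Stmt12Aux in
/-- there is a (necessarily unique) `k_q`-algebra homomorphism
`E^q_{(m',n',m,n)} : k_q[a]_{m',n'} → k_q[a]_{m,n}` with `a_{i,j} ↦ a_{i,j}` for
`-m ≤ i ≤ n-1`, `-m ≤ j ≤ -1`; `a_{i,j} ↦ 1` for `-m' ≤ i = j ≤ -m-1`; `a_{i,j} ↦ 0`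
otherwise. -/
theorem stmt12 (k : Type) [Field k] (m n m' n' : ℕ) (hm : 0 < m) (hn : 0 < n)
    (hmm : m ≤ m') (hnn : n ≤ n') :
    ∃! E : QMat k m' n' →ₐ[kq k] QMat k m n,
      ∀ (i : RowI m' n') (j : ColI m'),
        E (av k m' n' i j) =
          if h : (i.1 ∈ Finset.Icc (-(m : ℤ)) ((n : ℤ) - 1)) ∧
              (j.1 ∈ Finset.Icc (-(m : ℤ)) (-1 : ℤ)) then
            av k m n ⟨i.1, h.1⟩ ⟨j.1, h.2⟩
          else if i.1 = j.1 then 1 else 0 := by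
  have hE : ∀ (i : RowI m' n') (j : ColI m'),
      (RingQuot.liftAlgHom (kq k) ⟨FreeAlgebra.lift (kq k) (Fv k m n m' n'),
        key k m n m' n' hm hn hmm hnn⟩) (av k m' n' i j) = Fv k m n m' n' (i, j) := by
    intro i j
    rw [show av k m' n' i j = RingQuot.mkAlgHom (kq k) (QMRel k (RowI m' n') (ColI m'))
        (FreeAlgebra.ι (kq k) (i, j)) from rfl,
      RingQuot.liftAlgHom_mkAlgHom_apply, FreeAlgebra.lift_ι_apply]
  refine ⟨_, fun i j => hE i j, fun E' hE' => ?_⟩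
  refine RingQuot.ringQuot_ext' (kq k) _ _ (FreeAlgebra.hom_ext ?_)
  funext p
  obtain ⟨i, j⟩ := p
  exact (hE' i j).trans (hE i j).symm

end
end
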